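/- arXiv:2402.13574 — 13 statements merged into one kernel-verified Lean document; each statement's English description precedes it below -/
import Mathlib

section
/- Let A be a Banach algebra (or any associative ring), a ∈ A and j a positive integer. (i) a is left Drazin invertible with index j if and only if there exists x ∈ A such that axa = xa², x²a = x and (a − axa)^j = 0. (ii) Dually, a is right Drazin invertible with index j if and only if there exists y ∈ A such that aya = a²y, ay² = y and (a − aya)^j = 0. In particular, if axa = xa² and x²a = x, then (a − axa)² = a(a − axa) and (a − axa)^j = a^j − xa^{j+1}. -/
private lemma drazin_aux_left {A : Type*} [Ring A] (a x : A)
    (h1 : a * x * a = x * a ^ 2) (h2 : x ^ 2 * a = x) :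
    ∀ k : ℕ, (a - a * x * a) ^ (k + 1) = a ^ (k + 1) - x * a ^ (k + 2) := by
  have h1' : ∀ b : A, a * (x * (a * b)) = x * (a * (a * b)) := by
    intro b
    have := congrArg (· * b) h1
    simpa [mul_assoc, pow_two] using this
  have h2' : ∀ b : A, x * (x * (a * b)) = x * b := by
    intro b
    have := congrArg (· * b) h2
    simpa [mul_assoc, pow_two] using this
  have hp2 : ∀ n : ℕ, a ^ (n + 2) = a * a ^ (n + 1) := fun n => pow_succ' a (n + 1)
  have hp3 : ∀ n : ℕ, a ^ (n + 3) = a * a ^ (n + 2) := fun n => pow_succ' a (n + 2)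
  intro k
  induction k with
  | zero => rw [pow_one, pow_one, h1]
  | succ k ih =>
    have hs : (a - a * x * a) ^ (k + 2) = (a - a * x * a) * (a - a * x * a) ^ (k + 1) :=
      pow_succ' _ (k + 1)
    rw [hs, ih, hp3, hp2]
    simp only [mul_sub, sub_mul, mul_assoc, h1', h2']
    abel

private lemma drazin_aux_right {A : Type*} [Ring A] (a y : A)
    (h1 : a * y * a = a ^ 2 * y) (h2 : a * y ^ 2 = y) :
    ∀ k : ℕ, (a - a * y * a) ^ (k + 1) = a ^ (k + 1) - a ^ (k + 2) * y := by
  have h1' : ∀ b : A, b * a * y * a = b * a * a * y := by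
    intro b
    have := congrArg (b * ·) h1
    simpa [mul_assoc, pow_two] using this
  have h2' : ∀ b : A, b * a * y * y = b * y := by
    intro b
    have := congrArg (b * ·) h2
    simpa [mul_assoc, pow_two] using this
  have hq2 : ∀ n : ℕ, a ^ (n + 2) = a ^ (n + 1) * a := fun n => pow_succ a (n + 1)
  have hq3 : ∀ n : ℕ, a ^ (n + 3) = a ^ (n + 2) * a := fun n => pow_succ a (n + 2)
  intro k
  induction k with
  | zero => rw [pow_one, pow_one, h1]
  | succ k ih =>
    have hs : (a - a * y * a) ^ (k + 2) = (a - a * y * a) ^ (k + 1) * (a - a * y * a) :=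
      pow_succ _ (k + 1)
    rw [hs, ih, hq3, hq2]
    simp only [mul_sub, sub_mul, ← mul_assoc, h1', h2']
    abel

/-- One-sided Drazin invertibility via nilpotency of `a - axa` (Proposition 2.2).
(i) `a` is left Drazin invertible with index `j` iff there is `x` with
`axa = xa²`, `x²a = x` and `(a - axa)^j = 0`; (ii) the dual statement for right
Drazin invertibility; and the auxiliary identities
`(a - axa)² = a(a - axa)` and `(a - axa)^j = a^j - x a^{j+1}`. -/
theorem one_sided_drazin_iff_nilpotent {A : Type*} [NormedRing A] [CompleteSpace A]
    (a : A) (j : ℕ) (hj : 0 < j) :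
    ((∃ x : A, a * x * a = x * a ^ 2 ∧ x ^ 2 * a = x ∧ x * a ^ (j + 1) = a ^ j) ↔
      (∃ x : A, a * x * a = x * a ^ 2 ∧ x ^ 2 * a = x ∧ (a - a * x * a) ^ j = 0)) ∧
    ((∃ y : A, a * y * a = a ^ 2 * y ∧ a * y ^ 2 = y ∧ a ^ (j + 1) * y = a ^ j) ↔
      (∃ y : A, a * y * a = a ^ 2 * y ∧ a * y ^ 2 = y ∧ (a - a * y * a) ^ j = 0)) ∧
    (∀ x : A, a * x * a = x * a ^ 2 → x ^ 2 * a = x →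
      (a - a * x * a) ^ 2 = a * (a - a * x * a) ∧
      (a - a * x * a) ^ j = a ^ j - x * a ^ (j + 1)) := by
  obtain ⟨k, rfl⟩ : ∃ k, j = k + 1 := ⟨j - 1, by omega⟩
  refine ⟨⟨?_, ?_⟩, ⟨?_, ?_⟩, ?_⟩
  · rintro ⟨x, h1, h2, h3⟩
    exact ⟨x, h1, h2, by rw [drazin_aux_left a x h1 h2 k, h3, sub_self]⟩
  · rintro ⟨x, h1, h2, h3⟩
    refine ⟨x, h1, h2, ?_⟩
    have := drazin_aux_left a x h1 h2 k
    rw [h3] at this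
    exact (sub_eq_zero.mp this.symm).symm
  · rintro ⟨y, h1, h2, h3⟩
    exact ⟨y, h1, h2, by rw [drazin_aux_right a y h1 h2 k, h3, sub_self]⟩
  · rintro ⟨y, h1, h2, h3⟩
    refine ⟨y, h1, h2, ?_⟩
    have := drazin_aux_right a y h1 h2 k
    rw [h3] at this
    exact (sub_eq_zero.mp this.symm).symm
  · intro x h1 h2
    refine ⟨?_, drazin_aux_left a x h1 h2 k⟩
    have hx : a * (a * x * a) = x * a ^ 3 := by
      rw [h1]
      calc a * (x * a ^ 2) = (a * x * a) * a := by noncomm_ring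
      _ = (x * a ^ 2) * a := by rw [h1]
      _ = x * a ^ 3 := by noncomm_ring
    have := drazin_aux_left a x h1 h2 1
    rw [this, mul_sub, hx]
    noncomm_ring
end

section
/- Let A be a Banach algebra and a ∈ A. If a is both left Drazin invertible with index j (with left Drazin inverse x) and right Drazin invertible with index j (with right Drazin inverse y), then x = y, ax = xa, and hence a is Drazin invertible with index j with Drazin inverse x. -/
/-- Theorem 2.3: if `a` is both left and right Drazin invertible with index `j`,
with left Drazin inverse `x` and right Drazin inverse `y`, then `x = y`,
`ax = xa`, and `x` is a Drazin inverse of `a` with index `j`. -/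
theorem left_and_right_drazin_eq {A : Type*} [NormedRing A] [CompleteSpace A]
    (a x y : A) (j : ℕ)
    (h1 : a * x * a = x * a ^ 2) (h2 : x ^ 2 * a = x) (h3 : x * a ^ (j + 1) = a ^ j)
    (h4 : a * y * a = a ^ 2 * y) (h5 : a * y ^ 2 = y) (h6 : a ^ (j + 1) * y = a ^ j) :
    x = y ∧ a * x = x * a ∧
      (a * x = x * a ∧ x ^ 2 * a = x ∧ a ^ (j + 1) * x = a ^ j) := by
  have hx : ∀ k, x ^ (k + 1) * a ^ k = x := by
    intro k
    induction k with
    | zero => simp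
    | succ n ih =>
        calc x ^ (n + 2) * a ^ (n + 1)
            = x * (x ^ (n + 1) * a ^ n) * a := by
              rw [pow_succ' x (n + 1), pow_succ a n]
              noncomm_ring
          _ = x ^ 2 * a := by rw [ih]; noncomm_ring
          _ = x := h2
  have hy : ∀ k, a ^ k * y ^ (k + 1) = y := by
    intro k
    induction k with
    | zero => simp
    | succ n ih =>
        calc a ^ (n + 1) * y ^ (n + 2)
            = a * (a ^ n * y ^ (n + 1)) * y := by
              rw [pow_succ' a n, pow_succ y (n + 1)]
              noncomm_ring
          _ = a * y ^ 2 := by rw [ih]; noncomm_ring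
          _ = y := h5
  -- x = x * a * y
  have hxaj : x ^ (j + 1) * a ^ (j + 1) = x * a := by
    rw [pow_succ a j, ← mul_assoc, hx j]
  have hxxy : x = x * a * y := by
    calc x = x ^ (j + 1) * a ^ j := (hx j).symm
      _ = x ^ (j + 1) * (a ^ (j + 1) * y) := by rw [h6]
      _ = x ^ (j + 1) * a ^ (j + 1) * y := by rw [mul_assoc]
      _ = x * a * y := by rw [hxaj]
  have hayj : a ^ (j + 1) * y ^ (j + 1) = a * y := by
    rw [pow_succ' a j, mul_assoc, hy j]
  have hyxy : y = x * (a * y) := by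
    calc y = a ^ j * y ^ (j + 1) := (hy j).symm
      _ = x * a ^ (j + 1) * y ^ (j + 1) := by rw [h3]
      _ = x * (a ^ (j + 1) * y ^ (j + 1)) := by rw [mul_assoc]
      _ = x * (a * y) := by rw [hayj]
  have hxy : x = y := by rw [hxxy, mul_assoc]; exact hyxy.symm
  have hcomm : a * x = x * a := by
    calc a * x = a * (x * a * y) := by rw [← hxxy]
      _ = (a * x * a) * y := by noncomm_ring
      _ = x * a ^ 2 * y := by rw [h1]
      _ = x * (a ^ 2 * y) := by rw [mul_assoc]
      _ = x * (a * y * a) := by rw [h4]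
      _ = (x * (a * y)) * a := by noncomm_ring
      _ = y * a := by rw [← hyxy]
      _ = x * a := by rw [← hxy]
  refine ⟨hxy, hcomm, hcomm, h2, ?_⟩
  rw [hxy]; exact h6
end

section
/- Let A be a unital Banach algebra, a ∈ A and j a positive integer. Then a is left Drazin invertible with index j if and only if there exists an idempotent p ∈ A such that ap = pa, a + p is left invertible in A, and (ap)^j = 0. Dually, a is right Drazin invertible with index j if and only if there exists an idempotent p ∈ A such that ap = pa, a + p is right invertible in A, and (ap)^j = 0. -/
section Aux

variable {R : Type*} [Ring R]

private theorem drazin_left_aux (a : R) (j : ℕ) (hj : 0 < j) :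
    (∃ x : R, a * x * a = x * a ^ 2 ∧ x ^ 2 * a = x ∧ x * a ^ (j + 1) = a ^ j) ↔
      (∃ p : R, p * p = p ∧ a * p = p * a ∧ (∃ s : R, s * (a + p) = 1) ∧ (a * p) ^ j = 0) := by
  constructor
  · rintro ⟨x, h1, h2, h3⟩
    have hxa : x * a * (x * a) = x * a := by
      calc x * a * (x * a) = x * (a * x * a) := by noncomm_ring
        _ = x * (x * a ^ 2) := by rw [h1]
        _ = (x ^ 2 * a) * a := by noncomm_ring
        _ = x * a := by rw [h2]
    have hp : (1 - x * a) * (1 - x * a) = 1 - x * a := by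
      calc (1 - x * a) * (1 - x * a) = 1 - x * a - x * a + x * a * (x * a) := by noncomm_ring
        _ = 1 - x * a := by rw [hxa]; noncomm_ring
    have hcm : a * (1 - x * a) = (1 - x * a) * a := by
      calc a * (1 - x * a) = a - a * x * a := by noncomm_ring
        _ = a - x * a ^ 2 := by rw [h1]
        _ = (1 - x * a) * a := by noncomm_ring
    have hc : Commute a (1 - x * a) := hcm
    have h3' : x * (a * a ^ j) = a ^ j := by rw [← pow_succ']; exact h3
    have hpa : (1 - x * a) * a ^ j = 0 := by
      calc (1 - x * a) * a ^ j = a ^ j - x * (a * a ^ j) := by noncomm_ring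
        _ = 0 := by rw [h3']; noncomm_ring
    have hnil : (a * (1 - x * a)) ^ j = 0 := by
      obtain ⟨m, hm⟩ := Nat.exists_eq_succ_of_ne_zero hj.ne'
      have hidem : IsIdempotentElem (1 - x * a) := hp
      calc (a * (1 - x * a)) ^ j = a ^ j * (1 - x * a) ^ j := hc.mul_pow j
        _ = a ^ j * (1 - x * a) := by rw [hm, hidem.pow_succ_eq]
        _ = (1 - x * a) * a ^ j := (hc.pow_left j).eq
        _ = 0 := hpa
    refine ⟨1 - x * a, hp, hcm, ?_, hnil⟩
    obtain ⟨v, hv⟩ : ∃ v : R, v * (1 + a * (1 - x * a)) = 1 := by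
      refine ⟨∑ i ∈ Finset.range j, (-(a * (1 - x * a))) ^ i, ?_⟩
      have hgs := geom_sum_mul (-(a * (1 - x * a))) j
      rw [neg_pow, hnil, mul_zero] at hgs
      have e : (∑ i ∈ Finset.range j, (-(a * (1 - x * a))) ^ i) * (1 + a * (1 - x * a))
          = -((∑ i ∈ Finset.range j, (-(a * (1 - x * a))) ^ i)
              * ((-(a * (1 - x * a))) - 1)) := by noncomm_ring
      rw [e, hgs]; noncomm_ring
    refine ⟨x + v * (1 - x * a), ?_⟩
    have hxp : x * (1 - x * a) = 0 := by
      calc x * (1 - x * a) = x - x ^ 2 * a := by noncomm_ring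
        _ = 0 := by rw [h2]; noncomm_ring
    have e1 : (1 + a * (1 - x * a)) * (1 - x * a)
        = (1 - x * a) + a * ((1 - x * a) * (1 - x * a)) := by noncomm_ring
    rw [hp] at e1
    have hfold : (1 - x * a) * a + (1 - x * a) * (1 - x * a)
        = (1 + a * (1 - x * a)) * (1 - x * a) := by
      calc (1 - x * a) * a + (1 - x * a) * (1 - x * a)
          = (1 - x * a) * a + (1 - x * a) := by rw [hp]
        _ = a * (1 - x * a) + (1 - x * a) := by rw [hcm]
        _ = (1 - x * a) + a * (1 - x * a) := by noncomm_ring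
        _ = (1 + a * (1 - x * a)) * (1 - x * a) := e1.symm
    calc (x + v * (1 - x * a)) * (a + (1 - x * a))
        = x * a + x * (1 - x * a)
          + v * ((1 - x * a) * a + (1 - x * a) * (1 - x * a)) := by noncomm_ring
      _ = x * a + 0 + v * ((1 + a * (1 - x * a)) * (1 - x * a)) := by rw [hxp, hfold]
      _ = x * a + (v * (1 + a * (1 - x * a))) * (1 - x * a) := by noncomm_ring
      _ = x * a + 1 * (1 - x * a) := by rw [hv]
      _ = 1 := by noncomm_ring
  · rintro ⟨p, hp, hcomm, ⟨s, hs⟩, hnil⟩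
    set q : R := 1 - p with hq_def
    have haq : a * q = q * a := by
      rw [hq_def]
      calc a * (1 - p) = a - a * p := by noncomm_ring
        _ = a - p * a := by rw [hcomm]
        _ = (1 - p) * a := by noncomm_ring
    have hqq : q * q = q := by
      rw [hq_def]
      calc (1 - p) * (1 - p) = 1 - p - p + p * p := by noncomm_ring
        _ = 1 - p := by rw [hp]; noncomm_ring
    have hbq : (a + p) * q = a * q := by
      rw [hq_def]
      calc (a + p) * (1 - p) = a * (1 - p) + (p - p * p) := by noncomm_ring
        _ = a * (1 - p) := by rw [hp]; noncomm_ring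
    have hxa : (q * s * q) * a = q := by
      calc (q * s * q) * a = q * s * (q * a) := by noncomm_ring
        _ = q * s * (a * q) := by rw [haq]
        _ = q * s * ((a + p) * q) := by rw [hbq]
        _ = q * (s * (a + p)) * q := by noncomm_ring
        _ = q * q := by rw [hs]; noncomm_ring
        _ = q := hqq
    refine ⟨q * s * q, ?_, ?_, ?_⟩
    · calc a * (q * s * q) * a = a * ((q * s * q) * a) := by noncomm_ring
        _ = a * q := by rw [hxa]
        _ = q * a := haq
        _ = ((q * s * q) * a) * a := by rw [hxa]
        _ = (q * s * q) * a ^ 2 := by noncomm_ring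
    · calc (q * s * q) ^ 2 * a = (q * s * q) * ((q * s * q) * a) := by noncomm_ring
        _ = (q * s * q) * q := by rw [hxa]
        _ = q * s * (q * q) := by noncomm_ring
        _ = q * s * q := by rw [hqq]
    · have hc : Commute a p := hcomm
      have hajp : a ^ j * p = 0 := by
        obtain ⟨m, hm⟩ := Nat.exists_eq_succ_of_ne_zero hj.ne'
        have h1 : (a * p) ^ j = a ^ j * p ^ j := hc.mul_pow _
        have hpi : IsIdempotentElem p := hp
        rw [h1, hm, hpi.pow_succ_eq] at hnil
        rw [hm]; exact hnil
      calc (q * s * q) * a ^ (j + 1) = ((q * s * q) * a) * a ^ j := by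
            rw [pow_succ' a j]; noncomm_ring
        _ = q * a ^ j := by rw [hxa]
        _ = a ^ j - p * a ^ j := by rw [hq_def]; noncomm_ring
        _ = a ^ j - a ^ j * p := by rw [← (hc.pow_left j).eq]
        _ = a ^ j := by rw [hajp]; noncomm_ring

private theorem drazin_right_aux (a : R) (j : ℕ) (hj : 0 < j) :
    (∃ y : R, a * y * a = a ^ 2 * y ∧ a * y ^ 2 = y ∧ a ^ (j + 1) * y = a ^ j) ↔
      (∃ p : R, p * p = p ∧ a * p = p * a ∧ (∃ s : R, (a + p) * s = 1) ∧ (a * p) ^ j = 0) := by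
  constructor
  · rintro ⟨y, h1, h2, h3⟩
    have hay : a * y * (a * y) = a * y := by
      calc a * y * (a * y) = (a * y * a) * y := by noncomm_ring
        _ = (a ^ 2 * y) * y := by rw [h1]
        _ = a * (a * y ^ 2) := by noncomm_ring
        _ = a * y := by rw [h2]
    have hp : (1 - a * y) * (1 - a * y) = 1 - a * y := by
      calc (1 - a * y) * (1 - a * y) = 1 - a * y - a * y + a * y * (a * y) := by noncomm_ring
        _ = 1 - a * y := by rw [hay]; noncomm_ring
    have hcm : a * (1 - a * y) = (1 - a * y) * a := by
      calc a * (1 - a * y) = a - a ^ 2 * y := by noncomm_ring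
        _ = a - a * y * a := by rw [← h1]
        _ = (1 - a * y) * a := by noncomm_ring
    have hc : Commute a (1 - a * y) := hcm
    have h3' : a ^ j * (a * y) = a ^ j := by rw [← mul_assoc, ← pow_succ]; exact h3
    have hpa : a ^ j * (1 - a * y) = 0 := by
      calc a ^ j * (1 - a * y) = a ^ j - a ^ j * (a * y) := by noncomm_ring
        _ = 0 := by rw [h3']; noncomm_ring
    have hnil : (a * (1 - a * y)) ^ j = 0 := by
      obtain ⟨m, hm⟩ := Nat.exists_eq_succ_of_ne_zero hj.ne'
      have hidem : IsIdempotentElem (1 - a * y) := hp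
      calc (a * (1 - a * y)) ^ j = a ^ j * (1 - a * y) ^ j := hc.mul_pow j
        _ = a ^ j * (1 - a * y) := by rw [hm, hidem.pow_succ_eq]
        _ = 0 := hpa
    refine ⟨1 - a * y, hp, hcm, ?_, hnil⟩
    obtain ⟨v, hv⟩ : ∃ v : R, (1 + a * (1 - a * y)) * v = 1 := by
      refine ⟨∑ i ∈ Finset.range j, (-(a * (1 - a * y))) ^ i, ?_⟩
      have hgs := mul_geom_sum (-(a * (1 - a * y))) j
      rw [neg_pow, hnil, mul_zero] at hgs
      have e : (1 + a * (1 - a * y)) * (∑ i ∈ Finset.range j, (-(a * (1 - a * y))) ^ i)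
          = -(((-(a * (1 - a * y))) - 1)
              * (∑ i ∈ Finset.range j, (-(a * (1 - a * y))) ^ i)) := by noncomm_ring
      rw [e, hgs]; noncomm_ring
    refine ⟨y + (1 - a * y) * v, ?_⟩
    have hyp : (1 - a * y) * y = 0 := by
      calc (1 - a * y) * y = y - a * y ^ 2 := by noncomm_ring
        _ = 0 := by rw [h2]; noncomm_ring
    have e1 : (1 - a * y) * (1 + a * (1 - a * y))
        = (1 - a * y) + ((1 - a * y) * a) * (1 - a * y) := by noncomm_ring
    rw [← hcm] at e1
    have e2 : (a * (1 - a * y)) * (1 - a * y) = a * ((1 - a * y) * (1 - a * y)) := by noncomm_ring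
    rw [e2, hp] at e1
    have hfold : a * (1 - a * y) + (1 - a * y) * (1 - a * y)
        = (1 - a * y) * (1 + a * (1 - a * y)) := by
      calc a * (1 - a * y) + (1 - a * y) * (1 - a * y)
          = a * (1 - a * y) + (1 - a * y) := by rw [hp]
        _ = (1 - a * y) + a * (1 - a * y) := by noncomm_ring
        _ = (1 - a * y) * (1 + a * (1 - a * y)) := e1.symm
    calc (a + (1 - a * y)) * (y + (1 - a * y) * v)
        = a * y + (1 - a * y) * y
          + (a * (1 - a * y) + (1 - a * y) * (1 - a * y)) * v := by noncomm_ring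
      _ = a * y + 0 + ((1 - a * y) * (1 + a * (1 - a * y))) * v := by rw [hyp, hfold]
      _ = a * y + (1 - a * y) * ((1 + a * (1 - a * y)) * v) := by noncomm_ring
      _ = a * y + (1 - a * y) * 1 := by rw [hv]
      _ = 1 := by noncomm_ring
  · rintro ⟨p, hp, hcomm, ⟨s, hs⟩, hnil⟩
    set q : R := 1 - p with hq_def
    have haq : a * q = q * a := by
      rw [hq_def]
      calc a * (1 - p) = a - a * p := by noncomm_ring
        _ = a - p * a := by rw [hcomm]
        _ = (1 - p) * a := by noncomm_ring
    have hqq : q * q = q := by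
      rw [hq_def]
      calc (1 - p) * (1 - p) = 1 - p - p + p * p := by noncomm_ring
        _ = 1 - p := by rw [hp]; noncomm_ring
    have hqb : q * (a + p) = q * a := by
      rw [hq_def]
      calc (1 - p) * (a + p) = (1 - p) * a + (p - p * p) := by noncomm_ring
        _ = (1 - p) * a := by rw [hp]; noncomm_ring
    have hay : a * (q * s * q) = q := by
      calc a * (q * s * q) = (a * q) * s * q := by noncomm_ring
        _ = (q * a) * s * q := by rw [haq]
        _ = (q * (a + p)) * s * q := by rw [hqb]
        _ = q * ((a + p) * s) * q := by noncomm_ring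
        _ = q * q := by rw [hs]; noncomm_ring
        _ = q := hqq
    refine ⟨q * s * q, ?_, ?_, ?_⟩
    · calc a * (q * s * q) * a = q * a := by rw [hay]
        _ = a * q := by rw [haq]
        _ = a * (a * (q * s * q)) := by rw [hay]
        _ = a ^ 2 * (q * s * q) := by noncomm_ring
    · calc a * (q * s * q) ^ 2 = (a * (q * s * q)) * (q * s * q) := by noncomm_ring
        _ = q * (q * s * q) := by rw [hay]
        _ = (q * q) * s * q := by noncomm_ring
        _ = q * s * q := by rw [hqq]
    · have hc : Commute a p := hcomm
      have hpaj : p * a ^ j = 0 := by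
        obtain ⟨m, hm⟩ := Nat.exists_eq_succ_of_ne_zero hj.ne'
        have h1 : (a * p) ^ j = a ^ j * p ^ j := hc.mul_pow _
        have hpi : IsIdempotentElem p := hp
        rw [h1, hm, hpi.pow_succ_eq] at hnil
        rw [hm, ← (hc.pow_left (m + 1)).eq]
        exact hnil
      calc a ^ (j + 1) * (q * s * q) = a ^ j * (a * (q * s * q)) := by
            rw [pow_succ a j]; noncomm_ring
        _ = a ^ j * q := by rw [hay]
        _ = a ^ j - a ^ j * p := by rw [hq_def]; noncomm_ring
        _ = a ^ j - p * a ^ j := by rw [(hc.pow_left j).eq]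
        _ = a ^ j := by rw [hpaj]; noncomm_ring

end Aux

/-- Theorem 2.5: `a` is left (resp. right) Drazin invertible with index `j` iff
there is an idempotent `p` commuting with `a` such that `a + p` is left
(resp. right) invertible and `(ap)^j = 0`. -/
theorem left_right_drazin_iff_idempotent {A : Type*} [NormedRing A] [CompleteSpace A]
    (a : A) (j : ℕ) (hj : 0 < j) :
    ((∃ x : A, a * x * a = x * a ^ 2 ∧ x ^ 2 * a = x ∧ x * a ^ (j + 1) = a ^ j) ↔
      (∃ p : A, p * p = p ∧ a * p = p * a ∧ (∃ s : A, s * (a + p) = 1) ∧ (a * p) ^ j = 0)) ∧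
    ((∃ y : A, a * y * a = a ^ 2 * y ∧ a * y ^ 2 = y ∧ a ^ (j + 1) * y = a ^ j) ↔
      (∃ p : A, p * p = p ∧ a * p = p * a ∧ (∃ s : A, (a + p) * s = 1) ∧ (a * p) ^ j = 0)) :=
  ⟨drazin_left_aux a j hj, drazin_right_aux a j hj⟩
end

section
/- Let A be a Banach algebra and suppose a ∈ A is left Drazin invertible with index j and left Drazin inverse x. Then for every positive integer n, xⁿ is a left Drazin inverse of aⁿ with index j (that is, aⁿxⁿaⁿ = xⁿ(aⁿ)², (xⁿ)²aⁿ = xⁿ and xⁿ(aⁿ)^{j+1} = (aⁿ)^j). Moreover, x^j is a left group inverse of a^j. The dual statements hold for right Drazin inverses and right group inverses. -/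
lemma left_drazin_pow {A : Type*} [Ring A] (a x : A) (j : ℕ) (hj : 0 < j)
    (h1 : a * x * a = x * a ^ 2) (h2 : x ^ 2 * a = x) (h3 : x * a ^ (j + 1) = a ^ j) :
    (∀ n : ℕ, 0 < n →
      a ^ n * x ^ n * a ^ n = x ^ n * (a ^ n) ^ 2 ∧
      (x ^ n) ^ 2 * a ^ n = x ^ n ∧
      x ^ n * (a ^ n) ^ (j + 1) = (a ^ n) ^ j) ∧
    (a ^ j * x ^ j * a ^ j = x ^ j * (a ^ j) ^ 2 ∧
      (x ^ j) ^ 2 * a ^ j = x ^ j ∧ x ^ j * (a ^ j) ^ 2 = a ^ j) := by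
  have h2' : x * (x * a) = x := by rw [← mul_assoc, ← sq]; exact h2
  have L1 : ∀ m : ℕ, a ^ m * x * a = x * a ^ (m + 1) := by
    intro m
    induction m with
    | zero => simp
    | succ m ih =>
      calc a ^ (m + 1) * x * a = a * (a ^ m * x * a) := by
            rw [pow_succ']; simp only [mul_assoc]
        _ = a * (x * a ^ (m + 1)) := by rw [ih]
        _ = (a * x * a) * a ^ m := by
            rw [pow_succ' a m]; simp only [mul_assoc]
        _ = x * a ^ 2 * a ^ m := by rw [h1]
        _ = x * a ^ (m + 1 + 1) := by
            rw [mul_assoc, ← pow_add, Nat.add_comm]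
  have L2 : ∀ m : ℕ, x ^ (m + 1) * a ^ (m + 1) = x * a := by
    intro m
    induction m with
    | zero => simp
    | succ m ih =>
      calc x ^ (m + 2) * a ^ (m + 2)
          = x * (x ^ (m + 1) * a ^ (m + 1)) * a := by
            rw [pow_succ' x, pow_succ a]; simp only [mul_assoc]
        _ = x * (x * a) * a := by rw [ih]
        _ = x * a := by rw [h2']
  have L3 : ∀ k : ℕ, x * a ^ (j + k + 1) = a ^ (j + k) := by
    intro k
    induction k with
    | zero => exact h3
    | succ k ih =>
      have e : j + (k + 1) + 1 = (j + k + 1) + 1 := by ring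
      rw [e, pow_succ, ← mul_assoc, ih, ← pow_succ]
      congr 1
  have main : ∀ n : ℕ, 0 < n →
      a ^ n * x ^ n * a ^ n = x ^ n * (a ^ n) ^ 2 ∧
      (x ^ n) ^ 2 * a ^ n = x ^ n ∧
      x ^ n * (a ^ n) ^ (j + 1) = (a ^ n) ^ j := by
    intro n hn
    obtain ⟨m, rfl⟩ := Nat.exists_eq_succ_of_ne_zero hn.ne'
    refine ⟨?_, ?_, ?_⟩
    · calc a ^ (m + 1) * x ^ (m + 1) * a ^ (m + 1)
          = a ^ (m + 1) * (x ^ (m + 1) * a ^ (m + 1)) := by rw [mul_assoc]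
        _ = a ^ (m + 1) * x * a := by rw [L2 m, mul_assoc]
        _ = x * a ^ (m + 2) := L1 (m + 1)
        _ = x * a * a ^ (m + 1) := by
            rw [mul_assoc, ← pow_succ']
        _ = x ^ (m + 1) * a ^ (m + 1) * a ^ (m + 1) := by rw [L2 m]
        _ = x ^ (m + 1) * (a ^ (m + 1)) ^ 2 := by rw [sq, mul_assoc]
    · calc (x ^ (m + 1)) ^ 2 * a ^ (m + 1)
          = x ^ (m + 1) * (x ^ (m + 1) * a ^ (m + 1)) := by rw [sq, mul_assoc]
        _ = x ^ m * (x * (x * a)) := by rw [L2 m, pow_succ, mul_assoc]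
        _ = x ^ (m + 1) := by rw [h2', ← pow_succ]
    · rw [← pow_mul, ← pow_mul]
      have e1 : (m + 1) * (j + 1) = (m + 1) + (j + m * j) := by ring
      have e2 : (m + 1) * j = j + m * j := by ring
      rw [e1, e2, pow_add, ← mul_assoc, L2 m, mul_assoc, ← pow_succ']
      have e3 : j + m * j + 1 = j + m * j + 1 := rfl
      exact L3 (m * j)
  refine ⟨main, (main j hj).1, (main j hj).2.1, ?_⟩
  obtain ⟨m, rfl⟩ := Nat.exists_eq_succ_of_ne_zero hj.ne'
  calc x ^ (m + 1) * (a ^ (m + 1)) ^ 2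
      = x ^ (m + 1) * a ^ (m + 1) * a ^ (m + 1) := by rw [sq, mul_assoc]
    _ = x * a * a ^ (m + 1) := by rw [L2 m]
    _ = x * a ^ (m + 1 + 1) := by rw [mul_assoc, ← pow_succ']
    _ = a ^ (m + 1) := h3

/-- Proposition 2.7: if `x` is a left (resp. right) Drazin inverse of `a` with
index `j`, then for every positive integer `n`, `xⁿ` is a left (resp. right)
Drazin inverse of `aⁿ` with index `j`; moreover `x^j` is a left (resp. right)
group inverse of `a^j`. -/
theorem power_drazin_inverse {A : Type*} [NormedRing A] [CompleteSpace A]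
    (a : A) (j : ℕ) (hj : 0 < j) :
    (∀ x : A, a * x * a = x * a ^ 2 → x ^ 2 * a = x → x * a ^ (j + 1) = a ^ j →
      (∀ n : ℕ, 0 < n →
        a ^ n * x ^ n * a ^ n = x ^ n * (a ^ n) ^ 2 ∧
        (x ^ n) ^ 2 * a ^ n = x ^ n ∧
        x ^ n * (a ^ n) ^ (j + 1) = (a ^ n) ^ j) ∧
      (a ^ j * x ^ j * a ^ j = x ^ j * (a ^ j) ^ 2 ∧
        (x ^ j) ^ 2 * a ^ j = x ^ j ∧ x ^ j * (a ^ j) ^ 2 = a ^ j)) ∧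
    (∀ y : A, a * y * a = a ^ 2 * y → a * y ^ 2 = y → a ^ (j + 1) * y = a ^ j →
      (∀ n : ℕ, 0 < n →
        a ^ n * y ^ n * a ^ n = (a ^ n) ^ 2 * y ^ n ∧
        a ^ n * (y ^ n) ^ 2 = y ^ n ∧
        (a ^ n) ^ (j + 1) * y ^ n = (a ^ n) ^ j) ∧
      (a ^ j * y ^ j * a ^ j = (a ^ j) ^ 2 * y ^ j ∧
        a ^ j * (y ^ j) ^ 2 = y ^ j ∧ (a ^ j) ^ 2 * y ^ j = a ^ j)) := by
  constructor
  · intro x h1 h2 h3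
    exact left_drazin_pow a x j hj h1 h2 h3
  · intro y h1 h2 h3
    open MulOpposite in
    have key := left_drazin_pow (A := Aᵐᵒᵖ) (op a) (op y) j hj
      (by rw [← op_pow]; simp only [← op_mul, op_inj]; rw [← mul_assoc]; exact h1)
      (by rw [← op_pow]; simp only [← op_mul, op_inj]; exact h2)
      (by rw [← op_pow, ← op_pow]; simp only [← op_mul, op_inj]; exact h3)
    constructor
    · intro n hn
      obtain ⟨k1, k2, k3⟩ := key.1 n hn
      refine ⟨?_, ?_, ?_⟩
      · have := k1
        simp only [← op_pow, ← op_mul, op_inj] at this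
        rw [mul_assoc]; exact this
      · have := k2
        simp only [← op_pow, ← op_mul, op_inj] at this
        exact this
      · have := k3
        simp only [← op_pow, ← op_mul, op_inj] at this
        exact this
    · obtain ⟨k1, k2, k3⟩ := key.2
      refine ⟨?_, ?_, ?_⟩
      · simp only [← op_pow, ← op_mul, op_inj] at k1
        rw [mul_assoc]; exact k1
      · simp only [← op_pow, ← op_mul, op_inj] at k2
        exact k2
      · simp only [← op_pow, ← op_mul, op_inj] at k3
        exact k3
end

section
/- Let A be a Banach algebra, a ∈ A and n a positive integer. (i) If aⁿ has a left group inverse x which additionally satisfies axa = xa², then z := xa^{n−1} is a left Drazin inverse of a with index n (i.e., aza = za², z²a = z and za^{n+1} = aⁿ). (ii) Dually, if aⁿ has a right group inverse y which additionally satisfies aya = a²y, then w := a^{n−1}y is a right Drazin inverse of a with index n. -/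
private lemma push_left {A : Type*} [Ring A] (a x : A) (h : a * x * a = x * a ^ 2) :
    ∀ k j : ℕ, a ^ k * x * a ^ (j + 1) = x * a ^ (k + j + 1) := by
  intro k
  induction k with
  | zero => intro j; simp
  | succ k ih =>
    intro j
    have e1 : a ^ (k + 1) * x * a ^ (j + 1) = a ^ k * (a * x * a) * a ^ j := by
      rw [pow_succ, pow_succ']; noncomm_ring
    have e2 : a ^ k * (x * a ^ 2) * a ^ j = a ^ k * x * a ^ (j + 1 + 1) := by
      rw [show a ^ (j + 2) = a ^ 2 * a ^ j by rw [← pow_add]; ring_nf]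
      noncomm_ring
    rw [e1, h, e2, ih (j + 1), show k + (j + 1) + 1 = k + 1 + j + 1 by omega]

private lemma push_right {A : Type*} [Ring A] (a y : A) (h : a * y * a = a ^ 2 * y) :
    ∀ k j : ℕ, a ^ (j + 1) * y * a ^ k = a ^ (k + j + 1) * y := by
  intro k
  induction k with
  | zero => intro j; simp
  | succ k ih =>
    intro j
    have e1 : a ^ (j + 1) * y * a ^ (k + 1) = a ^ j * (a * y * a) * a ^ k := by
      rw [pow_succ, pow_succ']; noncomm_ring
    have e2 : a ^ j * (a ^ 2 * y) * a ^ k = a ^ (j + 1 + 1) * y * a ^ k := by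
      rw [show a ^ (j + 2) = a ^ j * a ^ 2 by rw [← pow_add]]
      noncomm_ring
    rw [e1, h, e2, ih (j + 1), show k + (j + 1) + 1 = k + 1 + j + 1 by omega]

/-- Proposition 2.8: (i) if `aⁿ` has a left group inverse `x` with `axa = xa²`,
then `z = x a^{n-1}` is a left Drazin inverse of `a` with index `n`;
(ii) dually, if `aⁿ` has a right group inverse `y` with `aya = a²y`, then
`w = a^{n-1} y` is a right Drazin inverse of `a` with index `n`. -/
theorem group_inverse_of_power_gives_drazin {A : Type*} [NormedRing A] [CompleteSpace A]
    (a : A) (n : ℕ) (hn : 0 < n) :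
    (∀ x : A, a ^ n * x * a ^ n = x * (a ^ n) ^ 2 → x ^ 2 * a ^ n = x →
      x * (a ^ n) ^ 2 = a ^ n → a * x * a = x * a ^ 2 →
        a * (x * a ^ (n - 1)) * a = (x * a ^ (n - 1)) * a ^ 2 ∧
        (x * a ^ (n - 1)) ^ 2 * a = x * a ^ (n - 1) ∧
        (x * a ^ (n - 1)) * a ^ (n + 1) = a ^ n) ∧
    (∀ y : A, a ^ n * y * a ^ n = (a ^ n) ^ 2 * y → a ^ n * y ^ 2 = y →
      (a ^ n) ^ 2 * y = a ^ n → a * y * a = a ^ 2 * y →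
        a * (a ^ (n - 1) * y) * a = a ^ 2 * (a ^ (n - 1) * y) ∧
        a * (a ^ (n - 1) * y) ^ 2 = a ^ (n - 1) * y ∧
        a ^ (n + 1) * (a ^ (n - 1) * y) = a ^ n) := by
  obtain ⟨m, rfl⟩ : ∃ m, n = m + 1 := ⟨n - 1, (Nat.succ_pred_eq_of_pos hn).symm⟩
  simp only [Nat.add_sub_cancel]
  constructor
  · intro x _ hx2 hx3 hx4
    have key := push_left a x hx4
    refine ⟨?_, ?_, ?_⟩
    · calc a * (x * a ^ m) * a = a ^ 1 * x * a ^ (m + 1) := by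
            simp only [pow_one, pow_succ, pow_zero, one_mul, mul_one, mul_assoc]
        _ = x * a ^ (1 + m + 1) := key 1 m
        _ = x * a ^ m * a ^ 2 := by
            rw [show 1 + m + 1 = m + 1 + 1 by omega]
            simp only [pow_succ, pow_two, pow_zero, one_mul, mul_one, mul_assoc]
    · calc (x * a ^ m) ^ 2 * a = x * (a ^ m * x * a ^ (m + 1)) := by
            simp only [pow_two, pow_succ, pow_zero, one_mul, mul_one, mul_assoc]
        _ = x * (x * a ^ (m + m + 1)) := by rw [key m m]
        _ = x ^ 2 * a ^ (m + 1) * a ^ m := by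
            rw [show m + m + 1 = m + 1 + m by omega, pow_add, pow_two]
            simp only [mul_assoc]
        _ = x * a ^ m := by rw [hx2]
    · calc x * a ^ m * a ^ (m + 1 + 1) = x * (a ^ (m + 1)) ^ 2 := by
            rw [mul_assoc, ← pow_add, pow_two, ← pow_add,
              show m + (m + 1 + 1) = m + 1 + (m + 1) by omega]
        _ = a ^ (m + 1) := hx3
  · intro y _ hy2 hy3 hy4
    have key := push_right a y hy4
    refine ⟨?_, ?_, ?_⟩
    · calc a * (a ^ m * y) * a = a ^ (m + 1) * y * a ^ 1 := by
            simp only [pow_one, pow_succ', pow_zero, one_mul, mul_one, mul_assoc]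
        _ = a ^ (1 + m + 1) * y := key 1 m
        _ = a ^ 2 * (a ^ m * y) := by
            rw [show 1 + m + 1 = 2 + m by omega, pow_add]
            simp only [mul_assoc]
    · calc a * (a ^ m * y) ^ 2 = a ^ (m + 1) * y * a ^ m * y := by
            simp only [pow_two, pow_succ', pow_zero, one_mul, mul_one, mul_assoc]
        _ = a ^ (m + m + 1) * y * y := by rw [key m m]
        _ = a ^ m * (a ^ (m + 1) * y ^ 2) := by
            rw [show m + m + 1 = m + (m + 1) by omega, pow_add, pow_two]
            simp only [mul_assoc]
        _ = a ^ m * y := by rw [hy2]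
    · calc a ^ (m + 1 + 1) * (a ^ m * y) = (a ^ (m + 1)) ^ 2 * y := by
            rw [pow_two, ← mul_assoc, ← pow_add, ← pow_add,
              show m + 1 + 1 + m = m + 1 + (m + 1) by omega]
        _ = a ^ (m + 1) := hy3
end

section
/- Let A be a unital Banach algebra and a ∈ A. If a is both left generalized Drazin invertible with left generalized Drazin inverse x and right generalized Drazin invertible with right generalized Drazin inverse y, then x = y and ax = xa; in particular a is generalized Drazin invertible with generalized Drazin inverse x. -/
open Filter Topology

/-- `q` is quasi-nilpotent: `‖qⁿ‖^{1/n} → 0`. -/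
def IsQuasinilpotentElem {A : Type*} [NormedRing A] (q : A) : Prop :=
  Tendsto (fun n : ℕ => ‖q ^ n‖ ^ ((1 : ℝ) / n)) atTop (𝓝 0)

lemma aux_zero_of_quasinilpotent {A : Type*} [NormedRing A] {q u : A} {c : ℝ} (hc : 0 ≤ c)
    (hq : IsQuasinilpotentElem q)
    (hu : ∀ n : ℕ, 1 ≤ n → ‖u‖ ≤ c ^ n * ‖q ^ n‖) : u = 0 := by
  set ε : ℝ := 1 / (2 * (c + 1)) with hεdef
  have hε : (0:ℝ) < ε := by positivity
  have hev : ∀ᶠ n : ℕ in atTop, ‖q ^ n‖ ^ ((1:ℝ)/n) < ε :=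
    hq.eventually (gt_mem_nhds hε)
  have hkey : ∀ᶠ n : ℕ in atTop, ‖u‖ ≤ (1/2 : ℝ) ^ n := by
    filter_upwards [hev, eventually_ge_atTop 1] with n hn hn1
    have h0 : (0:ℝ) ≤ ‖q ^ n‖ := norm_nonneg _
    have hne : (n:ℝ) ≠ 0 := Nat.cast_ne_zero.mpr (by omega)
    have hq_eq : (‖q ^ n‖ ^ ((1:ℝ)/n)) ^ (n:ℕ) = ‖q ^ n‖ := by
      rw [← Real.rpow_natCast (‖q ^ n‖ ^ ((1:ℝ)/n)) n, ← Real.rpow_mul h0,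
        one_div, inv_mul_cancel₀ hne, Real.rpow_one]
    have hq_le : ‖q ^ n‖ ≤ ε ^ n := by
      calc ‖q ^ n‖ = (‖q ^ n‖ ^ ((1:ℝ)/n)) ^ (n:ℕ) := hq_eq.symm
        _ ≤ ε ^ n := pow_le_pow_left₀ (Real.rpow_nonneg h0 _) hn.le n
    have hcε : c * ε ≤ 1/2 := by
      rw [hεdef, mul_one_div, div_le_div_iff₀ (by positivity) (by norm_num)]
      linarith
    calc ‖u‖ ≤ c ^ n * ‖q ^ n‖ := hu n hn1
      _ ≤ c ^ n * ε ^ n := by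
          exact mul_le_mul_of_nonneg_left hq_le (pow_nonneg hc n)
      _ = (c * ε) ^ n := (mul_pow _ _ _).symm
      _ ≤ (1/2 : ℝ) ^ n := pow_le_pow_left₀ (by positivity) hcε n
  have hle : ‖u‖ ≤ 0 :=
    ge_of_tendsto (tendsto_pow_atTop_nhds_zero_of_lt_one (by norm_num) (by norm_num)) hkey
  exact norm_le_zero_iff.mp hle

/-- Theorem 2.11: if `a` has a left generalized Drazin inverse `x` and a right
generalized Drazin inverse `y`, then `x = y`, `ax = xa`, and `x` is a
generalized Drazin inverse of `a`. -/
theorem left_and_right_generalized_drazin_eq {A : Type*} [NormedRing A] [CompleteSpace A]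
    (a x y : A)
    (h1 : a * x * a = x * a ^ 2) (h2 : x ^ 2 * a = x)
    (h3 : IsQuasinilpotentElem (a - a * x * a))
    (h4 : a * y * a = a ^ 2 * y) (h5 : a * y ^ 2 = y)
    (h6 : IsQuasinilpotentElem (a - a * y * a)) :
    x = y ∧ a * x = x * a ∧
      (a * x = x * a ∧ x ^ 2 * a = x ∧ IsQuasinilpotentElem (a - a * x * a)) := by
  -- basic commutation facts
  have hq2' : a - a * y * a = a * (1 - a * y) := by
    rw [mul_sub, mul_one, ← mul_assoc, ← sq, ← h4]
  have hq1' : a - a * x * a = (1 - x * a) * a := by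
    rw [sub_mul, one_mul, mul_assoc x a a, ← sq, ← h1]
  have hcy : Commute a (1 - a * y) := by
    show a * (1 - a * y) = (1 - a * y) * a
    rw [mul_sub, sub_mul, mul_one, one_mul, ← mul_assoc a a y, ← sq, ← h4]
  have hcx : Commute (1 - x * a) a := by
    show (1 - x * a) * a = a * (1 - x * a)
    rw [sub_mul, mul_sub, one_mul, mul_one, mul_assoc x a a, ← sq, ← h1, mul_assoc]
  -- idempotents
  have hqI : IsIdempotentElem (a * y) := by
    show a * y * (a * y) = a * y
    have e1 : a * y * (a * y) = (a * y * a) * y := by noncomm_ring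
    rw [e1, h4]
    calc a ^ 2 * y * y = a * (a * y ^ 2) := by noncomm_ring
      _ = a * y := by rw [h5]
  have hpI : IsIdempotentElem (x * a) := by
    show x * a * (x * a) = x * a
    have e1 : x * a * (x * a) = x * (a * x * a) := by noncomm_ring
    rw [e1, h1]
    calc x * (x * a ^ 2) = (x ^ 2 * a) * a := by noncomm_ring
      _ = x * a := by rw [h2]
  -- powers
  have hxpow : ∀ n : ℕ, x = x ^ (n + 1) * a ^ n := by
    intro n
    induction n with
    | zero => simp
    | succ n ih =>
      symm
      calc x ^ (n + 1 + 1) * a ^ (n + 1) = x ^ n * x ^ 2 * (a * a ^ n) := by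
            rw [show n + 1 + 1 = n + 2 from rfl, pow_add, pow_succ' a n]
        _ = x ^ n * (x ^ 2 * a) * a ^ n := by noncomm_ring
        _ = x ^ n * x * a ^ n := by rw [h2]
        _ = x ^ (n + 1) * a ^ n := by rw [pow_succ]
        _ = x := ih.symm
  have hypow : ∀ n : ℕ, y = a ^ n * y ^ (n + 1) := by
    intro n
    induction n with
    | zero => simp
    | succ n ih =>
      symm
      calc a ^ (n + 1) * y ^ (n + 1 + 1) = (a ^ n * a) * (y ^ 2 * y ^ n) := by
            rw [pow_succ, show n + 1 + 1 = 2 + n from by omega, pow_add]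
        _ = a ^ n * (a * y ^ 2) * y ^ n := by noncomm_ring
        _ = a ^ n * y * y ^ n := by rw [h5]
        _ = a ^ n * y ^ (n + 1) := by rw [pow_succ' y n, ← mul_assoc]
        _ = y := ih.symm
  -- power formulas for the quasinilpotents
  have hq2pow : ∀ n : ℕ, (a - a * y * a) ^ (n + 1) = a ^ (n + 1) * (1 - a * y) := by
    intro n
    rw [hq2', hcy.mul_pow, (hqI.one_sub).pow_succ_eq n]
  have hq1pow : ∀ n : ℕ, (a - a * x * a) ^ (n + 1) = (1 - x * a) * a ^ (n + 1) := by
    intro n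
    rw [hq1', hcx.mul_pow, (hpI.one_sub).pow_succ_eq n]
  -- the two key products vanish
  have hu0 : x * (a - a * y * a) = 0 := by
    apply aux_zero_of_quasinilpotent (norm_nonneg x) h6
    intro n hn
    obtain ⟨m, rfl⟩ : ∃ m, n = m + 1 := ⟨n - 1, by omega⟩
    have hid : x * (a - a * y * a) = x ^ (m + 1) * (a - a * y * a) ^ (m + 1) := by
      calc x * (a - a * y * a) = (x ^ (m + 1) * a ^ m) * (a * (1 - a * y)) := by
            rw [← hxpow m, ← hq2']
        _ = x ^ (m + 1) * (a ^ m * a * (1 - a * y)) := by noncomm_ring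
        _ = x ^ (m + 1) * (a ^ (m + 1) * (1 - a * y)) := by rw [pow_succ a m]
        _ = x ^ (m + 1) * (a - a * y * a) ^ (m + 1) := by rw [← hq2pow m]
    calc ‖x * (a - a * y * a)‖ = ‖x ^ (m + 1) * (a - a * y * a) ^ (m + 1)‖ := by rw [hid]
      _ ≤ ‖x ^ (m + 1)‖ * ‖(a - a * y * a) ^ (m + 1)‖ := norm_mul_le _ _
      _ ≤ ‖x‖ ^ (m + 1) * ‖(a - a * y * a) ^ (m + 1)‖ := by
          exact mul_le_mul_of_nonneg_right (norm_pow_le' x (Nat.succ_pos m)) (norm_nonneg _)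
  have hv0 : (a - a * x * a) * y = 0 := by
    apply aux_zero_of_quasinilpotent (norm_nonneg y) h3
    intro n hn
    obtain ⟨m, rfl⟩ : ∃ m, n = m + 1 := ⟨n - 1, by omega⟩
    have hid : (a - a * x * a) * y = (a - a * x * a) ^ (m + 1) * y ^ (m + 1) := by
      calc (a - a * x * a) * y = ((1 - x * a) * a) * (a ^ m * y ^ (m + 1)) := by
            rw [← hypow m, ← hq1']
        _ = (1 - x * a) * (a * a ^ m) * y ^ (m + 1) := by noncomm_ring
        _ = (1 - x * a) * a ^ (m + 1) * y ^ (m + 1) := by rw [pow_succ' a m]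
        _ = (a - a * x * a) ^ (m + 1) * y ^ (m + 1) := by rw [← hq1pow m]
    calc ‖(a - a * x * a) * y‖ = ‖(a - a * x * a) ^ (m + 1) * y ^ (m + 1)‖ := by rw [hid]
      _ ≤ ‖(a - a * x * a) ^ (m + 1)‖ * ‖y ^ (m + 1)‖ := norm_mul_le _ _
      _ ≤ ‖(a - a * x * a) ^ (m + 1)‖ * ‖y‖ ^ (m + 1) := by
          exact mul_le_mul_of_nonneg_left (norm_pow_le' y (Nat.succ_pos m)) (norm_nonneg _)
      _ = ‖y‖ ^ (m + 1) * ‖(a - a * x * a) ^ (m + 1)‖ := mul_comm _ _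
  -- from these, x*a = a*y
  rw [mul_sub, sub_eq_zero] at hu0
  rw [sub_mul, sub_eq_zero] at hv0
  have hp_eq : x * a = a * y := by
    calc x * a = x * (a * y * a) := hu0
      _ = x * (a ^ 2 * y) := by rw [h4]
      _ = (a * x * a) * y := by rw [← mul_assoc, ← h1]
      _ = a * y := hv0.symm
  have hxy : x = y := by
    calc x = x ^ 2 * a := h2.symm
      _ = x * (x * a) := by rw [sq, mul_assoc]
      _ = x * (a * y) := by rw [hp_eq]
      _ = (x * a) * y := by rw [mul_assoc]
      _ = (a * y) * y := by rw [hp_eq]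
      _ = a * y ^ 2 := by rw [mul_assoc, ← sq]
      _ = y := h5
  have hax : a * x = x * a := by rw [hp_eq, hxy]
  exact ⟨hxy, hax, hax, h2, h3⟩
end

section
/- Let A be a complex unital Banach algebra and a ∈ A. The following are equivalent: (i) a is left generalized Drazin invertible; (ii) there exists an idempotent p ∈ A such that ap = pa, a + p is left invertible, and ap is quasi-nilpotent; (iii) a is left quasi-polar, i.e., there exists an idempotent q ∈ A such that aq = qa, q ∈ Aa, and a(1−q) is quasi-nilpotent. Dually, the following are equivalent: (iv) a is right generalized Drazin invertible; (v) there exists an idempotent p ∈ A such that ap = pa, a + p is right invertible, and ap is quasi-nilpotent; (vi) a is right quasi-polar, i.e., there exists an idempotent q ∈ A such that aq = qa, q ∈ aA, and a(1−q) is quasi-nilpotent. -/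
open Filter Topology

/-- `a` is left generalized Drazin invertible. -/
def IsLeftGDInvertible {A : Type*} [NormedRing A] (a : A) : Prop :=
  ∃ x : A, a * x * a = x * a ^ 2 ∧ x ^ 2 * a = x ∧ IsQuasinilpotentElem (a - a * x * a)

/-- `a` is right generalized Drazin invertible. -/
def IsRightGDInvertible {A : Type*} [NormedRing A] (a : A) : Prop :=
  ∃ y : A, a * y * a = a ^ 2 * y ∧ a * y ^ 2 = y ∧ IsQuasinilpotentElem (a - a * y * a)

/-!
An idempotent `q` commuting with `a` splits `a` into the corner pieces `aq` and `a(1 - q)`.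
If `q = za`, then `x = qzq` satisfies `xa = q`, so `x` is a left inverse of `a` on the corner
`qAq`; this is the passage between a left generalized Drazin inverse `x` and the left
quasi-polar idempotent `q = xa`. For `p = 1 - q`, the element `ap` is quasi-nilpotent, so
`1 + ap` is invertible, and `a + p = (aq + p)(1 + ap)` where `aq + p` has the left inverse
`qzq + p`. The right-handed statements are the left-handed ones in the opposite algebra.
-/

open MulOpposite

def IsLeftQuasipolar {A : Type*} [NormedRing A] (a : A) : Prop :=
  ∃ q : A, IsIdempotentElem q ∧ Commute a q ∧ (∃ z : A, q = z * a) ∧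
    IsQuasinilpotentElem (a * (1 - q))

def IsRightQuasipolar {A : Type*} [NormedRing A] (a : A) : Prop :=
  ∃ q : A, IsIdempotentElem q ∧ Commute a q ∧ (∃ z : A, q = a * z) ∧
    IsQuasinilpotentElem (a * (1 - q))

section Ring

variable {R : Type*} [Ring R] {a q z : R}

theorem IsIdempotentElem.mul_mul_mul_eq_self_of_eq_mul (hq : IsIdempotentElem q)
    (hc : Commute a q) (hz : q = z * a) : q * z * q * a = q :=
  calc q * z * q * a = q * (z * a) * q := by rw [mul_assoc (q * z), ← hc.eq]; noncomm_ring
    _ = q := by rw [← hz, hq.eq, hq.eq]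

theorem IsIdempotentElem.exists_mul_add_one_sub_eq_one (hq : IsIdempotentElem q)
    (hc : Commute a q) (hz : q = z * a) (hu : IsUnit (1 + a * (1 - q))) :
    ∃ s, s * (a + (1 - q)) = 1 := by
  obtain ⟨u, hu⟩ := hu
  have hfactor : a + (1 - q) = (a * q + (1 - q)) * u := by
    rw [hu]
    linear_combination (norm := noncomm_ring) (1 - a) * hc.eq * (q - 1) + (a * a - a) * hq.eq
  have hx := hq.mul_mul_mul_eq_self_of_eq_mul hc hz
  have hinv : (q * z * q + (1 - q)) * (a * q + (1 - q)) = 1 := by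
    linear_combination (norm := noncomm_ring)
      hx * q - q * z * hq.eq + (1 - q) * hc.eq - hq.eq * a + 2 * hq.eq
  exact ⟨↑u⁻¹ * (q * z * q + (1 - q)), by
    rw [hfactor, mul_assoc, ← mul_assoc _ _ (u : R), hinv, one_mul, u.inv_mul]⟩

end Ring

section NormedRing

variable {A : Type*} [NormedRing A] {a : A}

theorem isQuasinilpotentElem_op : IsQuasinilpotentElem (op a) ↔ IsQuasinilpotentElem a :=
  Iff.rfl

theorem isLeftGDInvertible_iff_isLeftQuasipolar : IsLeftGDInvertible a ↔ IsLeftQuasipolar a := by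
  constructor
  · rintro ⟨x, h1, h2, hqn⟩
    refine ⟨x * a, ?_, ?_, ⟨x, rfl⟩, by rwa [mul_sub, mul_one, ← mul_assoc]⟩
    · show x * a * (x * a) = x * a
      linear_combination (norm := noncomm_ring) x * h1 + h2 * a
    · show a * (x * a) = x * a * a
      linear_combination (norm := noncomm_ring) h1
  · rintro ⟨q, hq, hc, ⟨z, hz⟩, hqn⟩
    have hx := hq.mul_mul_mul_eq_self_of_eq_mul hc hz
    refine ⟨q * z * q, ?_, ?_, ?_⟩
    · rw [mul_assoc, hx, sq, ← mul_assoc, hx, hc.eq]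
    · rw [sq, mul_assoc, hx, mul_assoc, hq.eq]
    · rwa [mul_assoc, hx, ← mul_one a, mul_assoc, one_mul, ← mul_sub]

theorem isLeftGDInvertible_op_iff : IsLeftGDInvertible (op a) ↔ IsRightGDInvertible a := by
  simp only [IsLeftGDInvertible, IsRightGDInvertible, op_surjective.exists, ← op_mul, ← op_pow,
    ← op_sub, op_inj, isQuasinilpotentElem_op, mul_assoc]

theorem isLeftQuasipolar_op_iff : IsLeftQuasipolar (op a) ↔ IsRightQuasipolar a := by
  simp only [IsLeftQuasipolar, IsRightQuasipolar, op_surjective.exists, IsIdempotentElem,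
    commute_op, ← op_mul, ← op_one, ← op_sub, op_inj, isQuasinilpotentElem_op]
  refine exists_congr fun q => and_congr_right' <| and_congr_right fun hc => and_congr_right' ?_
  rw [((Commute.one_right a).sub_right hc).eq]

theorem isRightGDInvertible_iff_isRightQuasipolar :
    IsRightGDInvertible a ↔ IsRightQuasipolar a := by
  rw [← isLeftGDInvertible_op_iff, isLeftGDInvertible_iff_isLeftQuasipolar,
    isLeftQuasipolar_op_iff]

end NormedRing

section BanachAlgebra

variable {A : Type*} [NormedRing A] [NormedAlgebra ℂ A] [CompleteSpace A] {a : A}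

theorem IsQuasinilpotentElem.spectralRadius_eq_zero {w : A} (hw : IsQuasinilpotentElem w) :
    spectralRadius ℂ w = 0 := by
  refine tendsto_nhds_unique (spectrum.pow_norm_pow_one_div_tendsto_nhds_spectralRadius w) ?_
  simpa using ENNReal.tendsto_ofReal hw

theorem IsQuasinilpotentElem.isUnit_one_add {w : A} (hw : IsQuasinilpotentElem w) :
    IsUnit (1 + w) := by
  have : (-1 : ℂ) ∈ resolventSet ℂ w :=
    spectrum.mem_resolventSet_of_spectralRadius_lt (by simp [hw.spectralRadius_eq_zero])
  simpa [spectrum.mem_resolventSet_iff, sub_eq_add_neg, add_comm] using this.neg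

theorem isLeftQuasipolar_iff_exists_leftInvertible_add :
    IsLeftQuasipolar a ↔ ∃ p : A, IsIdempotentElem p ∧ Commute a p ∧
      (∃ s : A, s * (a + p) = 1) ∧ IsQuasinilpotentElem (a * p) := by
  constructor
  · rintro ⟨q, hq, hc, ⟨z, hz⟩, hqn⟩
    exact ⟨1 - q, hq.one_sub, (Commute.one_right a).sub_right hc,
      hq.exists_mul_add_one_sub_eq_one hc hz hqn.isUnit_one_add, hqn⟩
  · rintro ⟨p, hp, hc, ⟨s, hs⟩, hqn⟩
    have hc' := (Commute.one_right a).sub_right hc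
    refine ⟨1 - p, hp.one_sub, hc', ⟨s * (1 - p), ?_⟩, by rwa [sub_sub_cancel]⟩
    calc 1 - p = s * (a + p) * (1 - p) := by rw [hs, one_mul]
      _ = s * (1 - p) * a := by
        linear_combination (norm := noncomm_ring) s * hc'.eq + s * hp.one_sub_mul_self

theorem isRightQuasipolar_iff_exists_rightInvertible_add :
    IsRightQuasipolar a ↔ ∃ p : A, IsIdempotentElem p ∧ Commute a p ∧
      (∃ s : A, (a + p) * s = 1) ∧ IsQuasinilpotentElem (a * p) := by
  rw [← isLeftQuasipolar_op_iff, isLeftQuasipolar_iff_exists_leftInvertible_add]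
  simp only [op_surjective.exists, IsIdempotentElem, commute_op, ← op_mul, ← op_add, ← op_one,
    op_inj, isQuasinilpotentElem_op]
  refine exists_congr fun p => and_congr_right' <| and_congr_right fun hc => and_congr_right' ?_
  rw [hc.eq]

end BanachAlgebra

/-- Theorem 2.14: in a complex unital Banach algebra, `a` is left (resp. right)
generalized Drazin invertible iff there is an idempotent `p` commuting with `a`
with `a + p` left (resp. right) invertible and `ap` quasi-nilpotent, iff `a` is
left (resp. right) quasi-polar. -/
theorem left_right_generalized_drazin_iff {A : Type*} [NormedRing A]
    [NormedAlgebra ℂ A] [CompleteSpace A] (a : A) :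
    (IsLeftGDInvertible a ↔
      ∃ p : A, p * p = p ∧ a * p = p * a ∧ (∃ s : A, s * (a + p) = 1) ∧
        IsQuasinilpotentElem (a * p)) ∧
    (IsLeftGDInvertible a ↔
      ∃ q : A, q * q = q ∧ a * q = q * a ∧ (∃ z : A, q = z * a) ∧
        IsQuasinilpotentElem (a * (1 - q))) ∧
    (IsRightGDInvertible a ↔
      ∃ p : A, p * p = p ∧ a * p = p * a ∧ (∃ s : A, (a + p) * s = 1) ∧
        IsQuasinilpotentElem (a * p)) ∧
    (IsRightGDInvertible a ↔
      ∃ q : A, q * q = q ∧ a * q = q * a ∧ (∃ z : A, q = a * z) ∧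
        IsQuasinilpotentElem (a * (1 - q))) := by
  exact ⟨isLeftGDInvertible_iff_isLeftQuasipolar.trans
      isLeftQuasipolar_iff_exists_leftInvertible_add,
    isLeftGDInvertible_iff_isLeftQuasipolar,
    isRightGDInvertible_iff_isRightQuasipolar.trans
      isRightQuasipolar_iff_exists_rightInvertible_add,
    isRightGDInvertible_iff_isRightQuasipolar⟩
end

section
/- Let A be a complex unital Banach algebra and a ∈ A. Suppose there exists an idempotent p ∈ A such that ap = pa, a + p is left invertible and ap is quasi-nilpotent. Then for every complex λ with 0 < |λ| < ‖s‖^{-1}, where s is any fixed left inverse of a + p, the element λ − a is left invertible; consequently, if 0 ∈ σ_l(a) then 0 is an isolated point of the left spectrum σ_l(a). The dual statement holds for right invertibility and the right spectrum σ_r(a). -/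
open Filter Topology

/-!
For `z ≠ 0`, split `z - a` along the commuting idempotent `p`. On `p` it agrees with `z - a p`,
which is invertible because `a p` is quasi-nilpotent; on `1 - p` it agrees with `z - (a + p)`,
which is left invertible for `‖z‖ < ‖s‖⁻¹` by a Neumann series around the left inverse `s`.
The two one-sided inverses glue to a left inverse of `z - a`. The right-handed statement is the
left-handed one in `Aᵐᵒᵖ`.
-/

open MulOpposite

theorem Commute.mul_eq_one_of_corners {R : Type*} [Ring R] {p b w t : R} (hb : Commute p b)
    (hw : w * (b * p) = p) (ht : t * (b * (1 - p)) = 1 - p) :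
    (w * p + t * (1 - p)) * b = 1 := by
  rw [add_mul, mul_assoc, mul_assoc, hb.eq, ((Commute.one_left b).sub_left hb).eq, hw, ht,
    add_sub_cancel]

theorem exists_mul_smul_one_sub_eq_one_of_mul_eq_one {𝕜 A : Type*} [NormedField 𝕜]
    [NormedRing A] [NormedAlgebra 𝕜 A] [CompleteSpace A] {b s : A} (hs : s * b = 1) {z : 𝕜}
    (hz : ‖z‖ < ‖s‖⁻¹) : ∃ x : A, x * (z • 1 - b) = 1 := by
  have hzs : ‖z • s‖ < 1 := by
    rcases eq_or_ne s 0 with rfl | hs0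
    · simp
    have hs_pos : 0 < ‖s‖ := norm_pos_iff.2 hs0
    calc ‖z • s‖ ≤ ‖z‖ * ‖s‖ := norm_smul_le z s
      _ < ‖s‖⁻¹ * ‖s‖ := mul_lt_mul_of_pos_right hz hs_pos
      _ = 1 := inv_mul_cancel₀ hs_pos.ne'
  obtain ⟨u, hu⟩ := isUnit_one_sub_of_norm_lt_one hzs
  refine ⟨-(↑u⁻¹ * s), ?_⟩
  have : s * (z • 1 - b) = -(1 - z • s) := by
    rw [mul_sub, hs, mul_smul_comm, mul_one, neg_sub]
  rw [neg_mul, mul_assoc, this, ← hu, mul_neg, neg_neg, Units.inv_mul]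

theorem IsQuasinilpotentElem.spectralRadius_eq_zero_s8 {A : Type*} [NormedRing A]
    [NormedAlgebra ℂ A] [CompleteSpace A] {q : A} (hq : IsQuasinilpotentElem q) :
    spectralRadius ℂ q = 0 :=
  tendsto_nhds_unique (spectrum.pow_norm_pow_one_div_tendsto_nhds_spectralRadius q)
    (by simpa [Function.comp_def] using (ENNReal.continuous_ofReal.tendsto 0).comp hq)

theorem IsQuasinilpotentElem.isUnit_smul_one_sub {A : Type*} [NormedRing A]
    [NormedAlgebra ℂ A] [CompleteSpace A] {q : A} (hq : IsQuasinilpotentElem q) {z : ℂ}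
    (hz : z ≠ 0) : IsUnit (z • 1 - q) := by
  have : spectralRadius ℂ q < ‖z‖₊ := by
    rw [hq.spectralRadius_eq_zero_s8]; exact_mod_cast nnnorm_pos.2 hz
  simpa [spectrum.mem_resolventSet_iff, Algebra.algebraMap_eq_smul_one] using
    spectrum.mem_resolventSet_of_spectralRadius_lt this

theorem IsQuasinilpotentElem.op {A : Type*} [NormedRing A] {q : A}
    (hq : IsQuasinilpotentElem q) : IsQuasinilpotentElem (op q) := by
  simpa [IsQuasinilpotentElem, ← op_pow, norm_op] using hq

section

variable {A : Type*} [NormedRing A] [NormedAlgebra ℂ A] [CompleteSpace A] {a p s : A}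

theorem exists_mul_smul_one_sub_eq_one (hp : IsIdempotentElem p) (hc : Commute a p)
    (hq : IsQuasinilpotentElem (a * p)) (hs : s * (a + p) = 1) {z : ℂ} (hz : z ≠ 0)
    (hzs : ‖z‖ < ‖s‖⁻¹) : ∃ x : A, x * (z • 1 - a) = 1 := by
  obtain ⟨u, hu⟩ := hq.isUnit_smul_one_sub hz
  obtain ⟨t, ht⟩ := exists_mul_smul_one_sub_eq_one_of_mul_eq_one hs hzs
  have hb : Commute p (z • 1 - a) := ((Commute.one_right p).smul_right z).sub_right hc.symm
  have hbp : (z • 1 - a) * p = u * p := by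
    rw [hu, sub_mul, sub_mul, mul_assoc, hp.eq]
  have hbq : (z • 1 - a) * (1 - p) = (z • 1 - (a + p)) * (1 - p) := by
    rw [sub_add_eq_sub_sub, sub_mul _ p, mul_sub p, mul_one, hp.eq, sub_self, sub_zero]
  refine ⟨_, hb.mul_eq_one_of_corners (w := ↑u⁻¹) (t := t) ?_ ?_⟩
  · rw [hbp, ← mul_assoc, Units.inv_mul, one_mul]
  · rw [hbq, ← mul_assoc, ht, one_mul]

theorem exists_smul_one_sub_mul_eq_one (hp : IsIdempotentElem p) (hc : Commute a p)
    (hq : IsQuasinilpotentElem (a * p)) (hs : (a + p) * s = 1) {z : ℂ} (hz : z ≠ 0)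
    (hzs : ‖z‖ < ‖s‖⁻¹) : ∃ x : A, (z • 1 - a) * x = 1 := by
  have hq' : IsQuasinilpotentElem (op a * op p) := by
    rw [← op_mul, ← hc.eq]; exact hq.op
  obtain ⟨x, hx⟩ := exists_mul_smul_one_sub_eq_one (s := op s) (congrArg op hp) hc.op hq'
    (by rw [← op_add, ← op_mul, hs, op_one]) hz hzs
  exact ⟨unop x, op_injective (by simpa using hx)⟩

end

/-- Theorem 2.14 (last part): if `p` is an idempotent commuting with `a` such
that `ap` is quasi-nilpotent, then for any fixed left inverse `s` of `a + p`,
`λ·1 - a` is left invertible whenever `0 < |λ| < ‖s‖⁻¹`; consequently if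
`0 ∈ σ_l(a)` then `0` is an isolated point of `σ_l(a)`.  The dual statement
holds for right invertibility and `σ_r(a)`. -/
theorem isolated_zero_of_left_right_spectral_idempotent {A : Type*} [NormedRing A]
    [NormedAlgebra ℂ A] [CompleteSpace A] (a p : A)
    (hp : p * p = p) (hc : a * p = p * a) (hq : IsQuasinilpotentElem (a * p)) :
    (∀ s : A, s * (a + p) = 1 →
      (∀ z : ℂ, 0 < ‖z‖ → ‖z‖ < ‖s‖⁻¹ → ∃ x : A, x * (z • (1 : A) - a) = 1) ∧
      ((¬ ∃ x : A, x * a = 1) →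
        ∃ ε > (0 : ℝ), ∀ z : ℂ, z ≠ 0 → ‖z‖ < ε → ∃ x : A, x * (z • (1 : A) - a) = 1)) ∧
    (∀ s : A, (a + p) * s = 1 →
      (∀ z : ℂ, 0 < ‖z‖ → ‖z‖ < ‖s‖⁻¹ → ∃ x : A, (z • (1 : A) - a) * x = 1) ∧
      ((¬ ∃ x : A, a * x = 1) →
        ∃ ε > (0 : ℝ), ∀ z : ℂ, z ≠ 0 → ‖z‖ < ε → ∃ x : A, (z • (1 : A) - a) * x = 1)) := by
  constructor
  · intro s hs
    have key z (hz : z ≠ 0) := exists_mul_smul_one_sub_eq_one hp hc hq hs hz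
    refine ⟨fun z hz => key z (norm_pos_iff.1 hz), fun ha => ⟨‖s‖⁻¹, ?_, key⟩⟩
    exact inv_pos.2 (norm_pos_iff.2 (by rintro rfl; exact ha ⟨0, by simpa using hs⟩))
  · intro s hs
    have key z (hz : z ≠ 0) := exists_smul_one_sub_mul_eq_one hp hc hq hs hz
    refine ⟨fun z hz => key z (norm_pos_iff.1 hz), fun ha => ⟨‖s‖⁻¹, ?_, key⟩⟩
    exact inv_pos.2 (norm_pos_iff.2 (by rintro rfl; exact ha ⟨0, by simpa using hs⟩))
end

section
/- Let A be a complex unital Banach algebra and a ∈ A. If a is both left quasi-polar and right quasi-polar, then a is quasi-polar. -/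
open Filter Topology

/-- If `b` is quasinilpotent and `‖x‖ ≤ ‖b^k‖ * ‖x‖ * M^k` for all `k ≥ 1`,
then `x = 0`. -/
lemma eq_zero_of_norm_le_quasinilpotent {A : Type*} [NormedRing A] (b : A) (M : ℝ)
    (hM : 0 ≤ M) (x : A) (hb : IsQuasinilpotentElem b)
    (hx : ∀ k : ℕ, 1 ≤ k → ‖x‖ ≤ ‖b ^ k‖ * ‖x‖ * M ^ k) : x = 0 := by
  by_contra h0
  have hxpos : 0 < ‖x‖ := norm_pos_iff.mpr h0
  have hεpos : (0 : ℝ) < (2 * (M + 1))⁻¹ := by positivity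
  obtain ⟨k, hkε, hk1⟩ :=
    ((hb.eventually_lt_const hεpos).and (eventually_ge_atTop 1)).exists
  have hk0 : (k : ℝ) ≠ 0 := by
    exact_mod_cast Nat.one_le_iff_ne_zero.mp hk1
  have hbk : ‖b ^ k‖ = (‖b ^ k‖ ^ ((1 : ℝ) / k)) ^ k := by
    rw [← Real.rpow_natCast (‖b ^ k‖ ^ ((1 : ℝ) / k)) k,
      ← Real.rpow_mul (norm_nonneg _), one_div, inv_mul_cancel₀ hk0, Real.rpow_one]
  set r : ℝ := ‖b ^ k‖ ^ ((1 : ℝ) / k) with hr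
  have hrnn : 0 ≤ r := Real.rpow_nonneg (norm_nonneg _) _
  have hrM : r * M ≤ 1 / 2 := by
    have h1 : r * M ≤ (2 * (M + 1))⁻¹ * (M + 1) :=
      mul_le_mul (le_of_lt hkε) (by linarith) hM (le_of_lt hεpos)
    have h2 : (2 * (M + 1))⁻¹ * (M + 1) = 1 / 2 := by
      field_simp
    linarith [h1, h2.le]
  have hlt : ‖b ^ k‖ * M ^ k < 1 := by
    rw [hbk, ← mul_pow]
    calc (r * M) ^ k ≤ (1 / 2 : ℝ) ^ k :=
          pow_le_pow_left₀ (by positivity) hrM k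
      _ < 1 := pow_lt_one₀ (by norm_num) (by norm_num) (Nat.one_le_iff_ne_zero.mp hk1)
  have hfin := hx k hk1
  nlinarith [hfin, hlt, hxpos, mul_nonneg (norm_nonneg (b ^ k)) (pow_nonneg hM k)]

/-- If `x = b^k * x * m^k` for all `k`, with `b` quasinilpotent, then `x = 0`. -/
lemma eq_zero_of_rec_left {A : Type*} [NormedRing A] (b m x : A)
    (hb : IsQuasinilpotentElem b) (hstep : x = b * x * m) : x = 0 := by
  have hrec : ∀ k : ℕ, x = b ^ k * x * m ^ k := by
    intro k
    induction k with
    | zero => simp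
    | succ k ih =>
      calc x = b * x * m := hstep
        _ = b * (b ^ k * x * m ^ k) * m := by rw [← ih]
        _ = b ^ (k + 1) * x * m ^ (k + 1) := by
            rw [pow_succ', pow_succ]
            simp only [mul_assoc]
  refine eq_zero_of_norm_le_quasinilpotent b ‖m‖ (norm_nonneg m) x hb ?_
  intro k hk
  calc ‖x‖ = ‖b ^ k * x * m ^ k‖ := by rw [← hrec k]
    _ ≤ ‖b ^ k * x‖ * ‖m ^ k‖ := norm_mul_le _ _
    _ ≤ (‖b ^ k‖ * ‖x‖) * ‖m ^ k‖ :=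
        mul_le_mul_of_nonneg_right (norm_mul_le _ _) (norm_nonneg _)
    _ ≤ (‖b ^ k‖ * ‖x‖) * ‖m‖ ^ k :=
        mul_le_mul_of_nonneg_left (norm_pow_le' m (Nat.lt_of_lt_of_le Nat.zero_lt_one hk))
          (mul_nonneg (norm_nonneg _) (norm_nonneg _))

/-- If `x = n^k * x * c^k` for all `k`, with `c` quasinilpotent, then `x = 0`. -/
lemma eq_zero_of_rec_right {A : Type*} [NormedRing A] (n c x : A)
    (hc : IsQuasinilpotentElem c) (hstep : x = n * x * c) : x = 0 := by
  have hrec : ∀ k : ℕ, x = n ^ k * x * c ^ k := by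
    intro k
    induction k with
    | zero => simp
    | succ k ih =>
      calc x = n * x * c := hstep
        _ = n * (n ^ k * x * c ^ k) * c := by rw [← ih]
        _ = n ^ (k + 1) * x * c ^ (k + 1) := by
            rw [pow_succ', pow_succ]
            simp only [mul_assoc]
  refine eq_zero_of_norm_le_quasinilpotent c ‖n‖ (norm_nonneg n) x hc ?_
  intro k hk
  calc ‖x‖ = ‖n ^ k * x * c ^ k‖ := by rw [← hrec k]
    _ ≤ ‖n ^ k * x‖ * ‖c ^ k‖ := norm_mul_le _ _
    _ ≤ (‖n ^ k‖ * ‖x‖) * ‖c ^ k‖ :=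
        mul_le_mul_of_nonneg_right (norm_mul_le _ _) (norm_nonneg _)
    _ ≤ (‖n‖ ^ k * ‖x‖) * ‖c ^ k‖ := by
        have := norm_pow_le' n (Nat.lt_of_lt_of_le Nat.zero_lt_one hk)
        have h2 : ‖n ^ k‖ * ‖x‖ ≤ ‖n‖ ^ k * ‖x‖ :=
          mul_le_mul_of_nonneg_right this (norm_nonneg _)
        exact mul_le_mul_of_nonneg_right h2 (norm_nonneg _)
    _ = ‖c ^ k‖ * ‖x‖ * ‖n‖ ^ k := by ring

/-- Corollary 2.16: if `a` is both left quasi-polar and right quasi-polar in a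
complex unital Banach algebra, then `a` is quasi-polar. -/
theorem quasiPolar_of_left_and_right_quasiPolar {A : Type*} [NormedRing A]
    [NormedAlgebra ℂ A] [CompleteSpace A] (a : A)
    (hl : ∃ p : A, p * p = p ∧ a * p = p * a ∧ (∃ z : A, p = z * a) ∧
      IsQuasinilpotentElem (a * (1 - p)))
    (hr : ∃ q : A, q * q = q ∧ a * q = q * a ∧ (∃ z : A, q = a * z) ∧
      IsQuasinilpotentElem (a * (1 - q))) :
    ∃ p : A, p * p = p ∧ a * p = p * a ∧ (∃ z : A, p = z * a) ∧ (∃ w : A, p = a * w) ∧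
      IsQuasinilpotentElem (a * (1 - p)) := by
  obtain ⟨p, hpp, hap, ⟨z, hz⟩, hb⟩ := hl
  obtain ⟨q, hqq, haq, ⟨w, hw⟩, hc⟩ := hr
  set b : A := a * (1 - p) with hbdef
  set c : A := a * (1 - q) with hcdef
  -- basic commutation facts
  have hcomm_p : (1 - p) * a = a * (1 - p) := by
    rw [sub_mul, mul_sub, one_mul, mul_one, hap]
  have hbp : b * p = 0 := by
    rw [hbdef, mul_assoc, sub_mul, one_mul, hpp, sub_self, mul_zero]
  have hqc : q * c = 0 := by
    rw [hcdef, ← mul_assoc, ← haq, mul_assoc, mul_sub, mul_one, hqq, sub_self, mul_zero]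
  -- the auxiliary elements m = q*w*q and n = p*z*p
  set m : A := q * w * q with hmdef
  set n : A := p * z * p with hndef
  have ham : a * m = q := by
    rw [hmdef, ← mul_assoc, ← mul_assoc, haq, mul_assoc q a w, ← hw, hqq, hqq]
  have hqm : q * m = m := by
    rw [hmdef, ← mul_assoc, ← mul_assoc, hqq]
  have hna : n * a = p := by
    rw [hndef, mul_assoc, mul_assoc, ← hap, ← mul_assoc z a p, ← hz, hpp, hpp]
  have hnp : n * p = n := by
    rw [hndef, mul_assoc, hpp]
  -- s := (1-p)*q = 0
  have hs : (1 - p) * q = 0 := by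
    apply eq_zero_of_rec_left b m _ hb
    have h1 : (1 - p) * q = b * m := by
      rw [← ham, ← mul_assoc, hcomm_p, ← hbdef]
    have hq_split : q = p * q + (1 - p) * q := by
      rw [sub_mul, one_mul]; abel
    calc (1 - p) * q = b * m := h1
      _ = b * (q * m) := by rw [hqm]
      _ = b * ((p * q + (1 - p) * q) * m) := by rw [← hq_split]
      _ = (b * p) * (q * m) + b * ((1 - p) * q) * m := by
          simp only [add_mul, mul_add, mul_assoc]
      _ = b * ((1 - p) * q) * m := by rw [hbp, zero_mul, zero_add]
  -- u := p*(1-q) = 0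
  have hu : p * (1 - q) = 0 := by
    apply eq_zero_of_rec_right n c _ hc
    have h1 : p * (1 - q) = n * c := by
      rw [← hna, mul_assoc, ← hcdef]
    have hp_split : p = p * q + p * (1 - q) := by
      rw [mul_sub, mul_one]; abel
    calc p * (1 - q) = n * c := h1
      _ = (n * p) * c := by rw [hnp]
      _ = n * ((p * q + p * (1 - q)) * c) := by rw [← hp_split, mul_assoc]
      _ = n * (p * (q * c)) + n * (p * (1 - q)) * c := by
          simp only [add_mul, mul_add, mul_assoc]
      _ = n * (p * (1 - q)) * c := by rw [hqc, mul_zero, mul_zero, zero_add]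
  -- hence p = p*q = q
  have hpq : p = q := by
    have h1 : q = p * q := by
      have := hs; rw [sub_mul, one_mul, sub_eq_zero] at this; exact this
    have h2 : p = p * q := by
      have := hu; rw [mul_sub, mul_one, sub_eq_zero] at this; exact this
    rw [h2, ← h1]
  exact ⟨p, hpp, hap, ⟨z, hz⟩, ⟨w, by rw [hpq]; exact hw⟩, hb⟩
end

section
/- Let A be a Banach algebra, a ∈ A and n a positive integer. If x is a left generalized Drazin inverse of a, then xⁿ is a left generalized Drazin inverse of aⁿ (that is, aⁿxⁿaⁿ = xⁿ(aⁿ)², (xⁿ)²aⁿ = xⁿ and aⁿ − aⁿxⁿaⁿ is quasi-nilpotent). Dually, if y is a right generalized Drazin inverse of a, then yⁿ is a right generalized Drazin inverse of aⁿ. -/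
open Filter Topology

lemma qnil_pow {A : Type*} [NormedRing A] {q : A} (hq : IsQuasinilpotentElem q)
    {n : ℕ} (hn : 0 < n) : IsQuasinilpotentElem (q ^ n) := by
  have hmul : Tendsto (fun k : ℕ => n * k) atTop atTop := by
    apply tendsto_atTop_atTop.mpr
    intro b
    exact ⟨b, fun k hk => le_trans hk (Nat.le_mul_of_pos_left k hn)⟩
  have h2 : Tendsto (fun k : ℕ => ‖q ^ (n * k)‖ ^ ((1 : ℝ) / (n * k : ℕ))) atTop (𝓝 0) :=
    hq.comp hmul
  have h3 : Tendsto (fun k : ℕ => (‖q ^ (n * k)‖ ^ ((1 : ℝ) / (n * k : ℕ))) ^ n) atTop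
      (𝓝 0) := by
    have := h2.pow n
    rwa [zero_pow hn.ne'] at this
  refine h3.congr' ?_
  filter_upwards [eventually_ge_atTop 1] with k hk
  have hx : (0 : ℝ) ≤ ‖q ^ (n * k)‖ := norm_nonneg _
  rw [← Real.rpow_natCast (‖q ^ (n * k)‖ ^ ((1 : ℝ) / (n * k : ℕ))) n, ← Real.rpow_mul hx,
    ← pow_mul]
  congr 1
  have hn' : (n : ℝ) ≠ 0 := Nat.cast_ne_zero.mpr hn.ne'
  have hk' : (k : ℝ) ≠ 0 := Nat.cast_ne_zero.mpr (by omega)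
  push_cast
  field_simp

lemma qnil_op {A : Type*} [NormedRing A] {z : A} (h : IsQuasinilpotentElem (MulOpposite.op z)) :
    IsQuasinilpotentElem z := by
  unfold IsQuasinilpotentElem at h ⊢
  have e : (fun k : ℕ => ‖(MulOpposite.op z) ^ k‖ ^ ((1 : ℝ) / k)) =
      fun k : ℕ => ‖z ^ k‖ ^ ((1 : ℝ) / k) := by
    funext k
    rw [← MulOpposite.op_pow, MulOpposite.norm_op]
  rwa [e] at h

lemma left_gdi_pow {A : Type*} [NormedRing A] (a x : A) (n : ℕ) (hn : 0 < n)
    (h1 : a * x * a = x * a ^ 2) (h2 : x ^ 2 * a = x)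
    (h3 : IsQuasinilpotentElem (a - a * x * a)) :
    a ^ n * x ^ n * a ^ n = x ^ n * (a ^ n) ^ 2 ∧
    (x ^ n) ^ 2 * a ^ n = x ^ n ∧
    IsQuasinilpotentElem (a ^ n - a ^ n * x ^ n * a ^ n) := by
  have hc : a * (x * a) = (x * a) * a := by
    rw [← mul_assoc, h1, pow_two, ← mul_assoc]
  have hC : Commute a (x * a) := hc
  have hcpow : ∀ k : ℕ, a ^ k * (x * a) = (x * a) * a ^ k := fun k => (hC.pow_left k)
  have hpp : (x * a) * (x * a) = x * a := by
    calc (x * a) * (x * a) = x * (a * (x * a)) := by rw [mul_assoc]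
      _ = x * ((x * a) * a) := by rw [hc]
      _ = (x ^ 2 * a) * a := by rw [pow_two, ← mul_assoc, ← mul_assoc]
      _ = x * a := by rw [h2]
  have hxp : x * (x * a) = x := by rw [← mul_assoc, ← pow_two, h2]
  have hxpow : ∀ k : ℕ, x ^ (k + 1) * (x * a) = x ^ (k + 1) := by
    intro k
    calc x ^ (k + 1) * (x * a) = x ^ k * (x * (x * a)) := by rw [pow_succ, mul_assoc]
      _ = x ^ k * x := by rw [hxp]
      _ = x ^ (k + 1) := (pow_succ x k).symm
  have key : ∀ k : ℕ, x ^ (k + 1) * a ^ (k + 1) = x * a := by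
    intro k
    induction k with
    | zero => simp
    | succ m ih =>
      have hsplit : x ^ (m + 2) * a ^ (m + 2) = x ^ (m + 1) * (x * a) * a ^ (m + 1) := by
        rw [pow_succ x (m + 1), pow_succ' a (m + 1), mul_assoc (x ^ (m + 1)) x,
          ← mul_assoc x a (a ^ (m + 1)), ← mul_assoc]
      calc x ^ (m + 2) * a ^ (m + 2) = x ^ (m + 1) * (x * a) * a ^ (m + 1) := hsplit
        _ = x ^ (m + 1) * (a ^ (m + 1) * (x * a)) := by rw [mul_assoc, ← hcpow (m + 1)]
        _ = (x * a) * (x * a) := by rw [← mul_assoc, ih]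
        _ = x * a := hpp
  obtain ⟨m, rfl⟩ := Nat.exists_eq_succ_of_ne_zero hn.ne'
  have eL : a ^ (m + 1) * x ^ (m + 1) * a ^ (m + 1) = a ^ (m + 1) * (x * a) := by
    rw [mul_assoc, key m]
  refine ⟨?_, ?_, ?_⟩
  · calc a ^ (m + 1) * x ^ (m + 1) * a ^ (m + 1) = a ^ (m + 1) * (x * a) := eL
      _ = (x * a) * a ^ (m + 1) := hcpow (m + 1)
      _ = (x ^ (m + 1) * a ^ (m + 1)) * a ^ (m + 1) := by rw [key m]
      _ = x ^ (m + 1) * (a ^ (m + 1)) ^ 2 := by rw [mul_assoc, ← pow_two]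
  · calc (x ^ (m + 1)) ^ 2 * a ^ (m + 1) = x ^ (m + 1) * (x ^ (m + 1) * a ^ (m + 1)) := by
              rw [pow_two, mul_assoc]
      _ = x ^ (m + 1) * (x * a) := by rw [key m]
      _ = x ^ (m + 1) := hxpow m
  · have hqp : (a - a * x * a) * (x * a) = 0 := by
      have e : a * x * a = a * (x * a) := mul_assoc a x a
      rw [e, sub_mul, mul_assoc, hpp, sub_self]
    have hqq : (a - a * x * a) * (a - a * x * a) = (a - a * x * a) * a := by
      have e : a * x * a = a * (x * a) := mul_assoc a x a
      have e2 : (a - a * x * a) * (a * (x * a)) = 0 := by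
        rw [hc, ← mul_assoc, hqp, zero_mul]
      calc (a - a * x * a) * (a - a * x * a)
          = (a - a * x * a) * a - (a - a * x * a) * (a * (x * a)) := by rw [← mul_sub, ← e]
        _ = (a - a * x * a) * a := by rw [e2, sub_zero]
    have hqstep : ∀ k : ℕ, (a - a * x * a) ^ (k + 1) = (a - a * x * a) * a ^ k := by
      intro k
      induction k with
      | zero => simp
      | succ j ih =>
        calc (a - a * x * a) ^ (j + 2) = (a - a * x * a) * (a - a * x * a) ^ (j + 1) := by
               rw [pow_succ']
          _ = (a - a * x * a) * ((a - a * x * a) * a ^ j) := by rw [ih]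
          _ = ((a - a * x * a) * (a - a * x * a)) * a ^ j := (mul_assoc _ _ _).symm
          _ = ((a - a * x * a) * a) * a ^ j := by rw [hqq]
          _ = (a - a * x * a) * a ^ (j + 1) := by rw [mul_assoc, ← pow_succ']
    have eR : (a - a * x * a) * a ^ m = a ^ (m + 1) - a ^ (m + 1) * (x * a) := by
      rw [sub_mul]
      congr 1
      · rw [← pow_succ']
      · rw [mul_assoc a x a, mul_assoc, ← hcpow m, ← mul_assoc, ← pow_succ']
    have e2 : a ^ (m + 1) - a ^ (m + 1) * x ^ (m + 1) * a ^ (m + 1) =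
        (a - a * x * a) ^ (m + 1) := by
      rw [hqstep m, eR, eL]
    rw [e2]
    exact qnil_pow h3 hn

/-- Theorem 2.17: if `x` is a left (resp. right) generalized Drazin inverse of
`a`, then `xⁿ` is a left (resp. right) generalized Drazin inverse of `aⁿ`. -/
theorem power_generalized_drazin_inverse {A : Type*} [NormedRing A] [CompleteSpace A]
    (a : A) (n : ℕ) (hn : 0 < n) :
    (∀ x : A, a * x * a = x * a ^ 2 → x ^ 2 * a = x →
      IsQuasinilpotentElem (a - a * x * a) →
        a ^ n * x ^ n * a ^ n = x ^ n * (a ^ n) ^ 2 ∧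
        (x ^ n) ^ 2 * a ^ n = x ^ n ∧
        IsQuasinilpotentElem (a ^ n - a ^ n * x ^ n * a ^ n)) ∧
    (∀ y : A, a * y * a = a ^ 2 * y → a * y ^ 2 = y →
      IsQuasinilpotentElem (a - a * y * a) →
        a ^ n * y ^ n * a ^ n = (a ^ n) ^ 2 * y ^ n ∧
        a ^ n * (y ^ n) ^ 2 = y ^ n ∧
        IsQuasinilpotentElem (a ^ n - a ^ n * y ^ n * a ^ n)) := by
  constructor
  · intro x h1 h2 h3
    exact left_gdi_pow a x n hn h1 h2 h3
  · intro y h1 h2 h3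
    have k1 : MulOpposite.op a * MulOpposite.op y * MulOpposite.op a =
        MulOpposite.op y * (MulOpposite.op a) ^ 2 := by
      rw [← MulOpposite.op_mul, ← MulOpposite.op_mul, ← MulOpposite.op_pow,
        ← MulOpposite.op_mul]
      congr 1
      rw [← mul_assoc]
      exact h1
    have k2 : (MulOpposite.op y) ^ 2 * MulOpposite.op a = MulOpposite.op y := by
      rw [← MulOpposite.op_pow, ← MulOpposite.op_mul, h2]
    have k3 : IsQuasinilpotentElem (MulOpposite.op a -
        MulOpposite.op a * MulOpposite.op y * MulOpposite.op a) := by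
      have e : MulOpposite.op a - MulOpposite.op a * MulOpposite.op y * MulOpposite.op a =
          MulOpposite.op (a - a * y * a) := by
        rw [MulOpposite.op_sub, MulOpposite.op_mul, MulOpposite.op_mul, ← mul_assoc]
      rw [e]
      unfold IsQuasinilpotentElem at h3 ⊢
      have f : (fun k : ℕ => ‖(MulOpposite.op (a - a * y * a)) ^ k‖ ^ ((1 : ℝ) / k)) =
          fun k : ℕ => ‖(a - a * y * a) ^ k‖ ^ ((1 : ℝ) / k) := by
        funext k
        rw [← MulOpposite.op_pow, MulOpposite.norm_op]
      rw [f]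
      exact h3
    obtain ⟨H1, H2, H3⟩ := left_gdi_pow (MulOpposite.op a) (MulOpposite.op y) n hn k1 k2 k3
    simp only [← MulOpposite.op_pow, ← MulOpposite.op_mul, MulOpposite.op_inj] at H1 H2
    refine ⟨?_, ?_, ?_⟩
    · rw [mul_assoc]
      exact H1
    · exact H2
    · simp only [← MulOpposite.op_pow, ← MulOpposite.op_mul, ← MulOpposite.op_sub] at H3
      have := qnil_op H3
      rw [mul_assoc]
      exact this
end

section
/- Let A be a unital Banach algebra and a ∈ A. (i) If a is left generalized Drazin invertible with left generalized Drazin inverse x and p = 1 − xa is the associated left spectral idempotent, then for every w ∈ A with wa = aw one has wp = pwp. (ii) Dually, if a is right generalized Drazin invertible with right generalized Drazin inverse y and p = 1 − ay is the associated right spectral idempotent, then for every w ∈ A with wa = aw one has pw = pwp. (iii) Consequently, if a is generalized Drazin invertible with spectral idempotent p, then wp = pw for every w commuting with a. -/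
open Filter Topology

/-- If `‖z‖ ≤ D * (Cⁿ * ‖qⁿ‖)` for all `n ≥ 1` with `q` quasi-nilpotent, then `z = 0`. -/
lemma IsQuasinilpotentElem.eq_zero_of_le {A : Type*} [NormedRing A] {q : A}
    (hq : IsQuasinilpotentElem q) {z : A} (C D : ℝ) (hC : 0 ≤ C) (hD : 0 ≤ D)
    (h : ∀ n : ℕ, 0 < n → ‖z‖ ≤ D * (C ^ n * ‖q ^ n‖)) : z = 0 := by
  have hf : Tendsto (fun n : ℕ => C * ‖q ^ n‖ ^ ((1 : ℝ) / n)) atTop (𝓝 0) := by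
    simpa using hq.const_mul C
  have hev : ∀ᶠ n : ℕ in atTop, ‖z‖ ≤ D * (1 / 2 : ℝ) ^ n := by
    filter_upwards [hf.eventually_lt_const (by norm_num : (0 : ℝ) < 1 / 2),
      eventually_ge_atTop 1] with n h2 h1
    have hn0 : (n : ℝ) ≠ 0 := Nat.cast_ne_zero.mpr (by omega)
    have hqn : (‖q ^ n‖ ^ ((1 : ℝ) / n)) ^ n = ‖q ^ n‖ := by
      rw [← Real.rpow_natCast (‖q ^ n‖ ^ ((1 : ℝ) / n)) n, ← Real.rpow_mul (norm_nonneg _),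
        one_div, inv_mul_cancel₀ hn0, Real.rpow_one]
    have hnn : 0 ≤ C * ‖q ^ n‖ ^ ((1 : ℝ) / n) :=
      mul_nonneg hC (Real.rpow_nonneg (norm_nonneg _) _)
    calc ‖z‖ ≤ D * (C ^ n * ‖q ^ n‖) := h n (by omega)
      _ = D * (C * ‖q ^ n‖ ^ ((1 : ℝ) / n)) ^ n := by rw [mul_pow, hqn]
      _ ≤ D * (1 / 2 : ℝ) ^ n := by
          exact mul_le_mul_of_nonneg_left (pow_le_pow_left₀ hnn h2.le n) hD
  have h0 : Tendsto (fun n : ℕ => D * (1 / 2 : ℝ) ^ n) atTop (𝓝 0) := by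
    simpa using (tendsto_pow_atTop_nhds_zero_of_lt_one (by norm_num : (0:ℝ) ≤ 1/2) (by norm_num : (1/2:ℝ) < 1)).const_mul D
  have : ‖z‖ ≤ 0 := ge_of_tendsto h0 hev
  exact norm_le_zero_iff.mp this

/-- Part (i): left generalized Drazin inverse case. -/
lemma left_gdrazin_case {A : Type*} [NormedRing A] (a x : A)
    (h1 : a * x * a = x * a ^ 2) (h2 : x ^ 2 * a = x)
    (hq : IsQuasinilpotentElem (a - a * x * a))
    (w : A) (hw : w * a = a * w) :
    w * (1 - x * a) = (1 - x * a) * w * (1 - x * a) := by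
  -- basic identities
  have hxaxa : x * a * (x * a) = x * a := by
    calc x * a * (x * a) = x * (a * x * a) := by noncomm_ring
      _ = x * (x * a ^ 2) := by rw [h1]
      _ = x ^ 2 * a * a := by noncomm_ring
      _ = x * a := by rw [h2]
  have hpp : IsIdempotentElem (1 - x * a) := by
    show (1 - x * a) * (1 - x * a) = 1 - x * a
    calc (1 - x * a) * (1 - x * a) = 1 - x * a - x * a + x * a * (x * a) := by noncomm_ring
      _ = 1 - x * a - x * a + x * a := by rw [hxaxa]
      _ = 1 - x * a := by noncomm_ring
  have hcomm : Commute a (1 - x * a) := by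
    show a * (1 - x * a) = (1 - x * a) * a
    calc a * (1 - x * a) = a - a * x * a := by noncomm_ring
      _ = a - x * a ^ 2 := by rw [h1]
      _ = (1 - x * a) * a := by noncomm_ring
  have hq' : IsQuasinilpotentElem (a * (1 - x * a)) := by
    have : a * (1 - x * a) = a - a * x * a := by noncomm_ring
    rwa [this]
  -- x = x^(n+1) * a^n
  have hxn : ∀ n : ℕ, x = x ^ (n + 1) * a ^ n := by
    intro n
    induction n with
    | zero => simp
    | succ n ih =>
      have hstep : x ^ (n + 2) * a = x ^ (n + 1) := by
        calc x ^ (n + 2) * a = x ^ n * (x ^ 2 * a) := by rw [← mul_assoc, ← pow_add]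
          _ = x ^ n * x := by rw [h2]
          _ = x ^ (n + 1) := by rw [pow_succ]
      calc x = x ^ (n + 1) * a ^ n := ih
        _ = (x ^ (n + 2) * a) * a ^ n := by rw [hstep]
        _ = x ^ (n + 2) * a ^ (n + 1) := by rw [mul_assoc, ← pow_succ']
  -- key identity
  have key : ∀ n : ℕ, x * a * w * (1 - x * a)
      = x ^ (n + 1) * w * (a * (1 - x * a)) ^ (n + 1) := by
    intro n
    have hwa : w * a ^ (n + 1) = a ^ (n + 1) * w := (Commute.pow_right hw (n + 1))
    calc x * a * w * (1 - x * a)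
        = (x ^ (n + 1) * a ^ n) * a * w * (1 - x * a) := by rw [← hxn n]
      _ = x ^ (n + 1) * (a ^ (n + 1) * w) * (1 - x * a) := by
          rw [mul_assoc (x ^ (n + 1)) (a ^ n) a, ← pow_succ, mul_assoc (x ^ (n + 1))]
      _ = x ^ (n + 1) * (w * a ^ (n + 1)) * (1 - x * a) := by rw [hwa]
      _ = x ^ (n + 1) * w * (a ^ (n + 1) * (1 - x * a)) := by
          rw [← mul_assoc, mul_assoc (x ^ (n + 1) * w)]
      _ = x ^ (n + 1) * w * (a * (1 - x * a)) ^ (n + 1) := by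
          rw [hcomm.mul_pow, hpp.pow_succ_eq]
  -- conclude z = 0
  have hz : x * a * w * (1 - x * a) = 0 := by
    apply hq'.eq_zero_of_le ‖x‖ ‖w‖ (norm_nonneg _) (norm_nonneg _)
    intro n hn
    obtain ⟨m, rfl⟩ : ∃ m, n = m + 1 := ⟨n - 1, by omega⟩
    rw [key m]
    calc ‖x ^ (m + 1) * w * (a * (1 - x * a)) ^ (m + 1)‖
        ≤ ‖x ^ (m + 1) * w‖ * ‖(a * (1 - x * a)) ^ (m + 1)‖ := norm_mul_le _ _
      _ ≤ ‖x ^ (m + 1)‖ * ‖w‖ * ‖(a * (1 - x * a)) ^ (m + 1)‖ := by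
          gcongr; exact norm_mul_le _ _
      _ ≤ ‖x‖ ^ (m + 1) * ‖w‖ * ‖(a * (1 - x * a)) ^ (m + 1)‖ := by
          gcongr; exact norm_pow_le' x (by omega)
      _ = ‖w‖ * (‖x‖ ^ (m + 1) * ‖(a * (1 - x * a)) ^ (m + 1)‖) := by ring
  have : (1 - x * a) * w * (1 - x * a) = w * (1 - x * a) - x * a * w * (1 - x * a) := by
    noncomm_ring
  rw [this, hz, sub_zero]

/-- Part (ii): right generalized Drazin inverse case. -/
lemma right_gdrazin_case {A : Type*} [NormedRing A] (a y : A)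
    (h1 : a * y * a = a ^ 2 * y) (h2 : a * y ^ 2 = y)
    (hq : IsQuasinilpotentElem (a - a * y * a))
    (w : A) (hw : w * a = a * w) :
    (1 - a * y) * w = (1 - a * y) * w * (1 - a * y) := by
  have hyaya : a * y * (a * y) = a * y := by
    calc a * y * (a * y) = (a * y * a) * y := by noncomm_ring
      _ = (a ^ 2 * y) * y := by rw [h1]
      _ = a * (a * y ^ 2) := by noncomm_ring
      _ = a * y := by rw [h2]
  have hpp : IsIdempotentElem (1 - a * y) := by
    show (1 - a * y) * (1 - a * y) = 1 - a * y
    calc (1 - a * y) * (1 - a * y) = 1 - a * y - a * y + a * y * (a * y) := by noncomm_ring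
      _ = 1 - a * y - a * y + a * y := by rw [hyaya]
      _ = 1 - a * y := by noncomm_ring
  have hcomm : Commute a (1 - a * y) := by
    show a * (1 - a * y) = (1 - a * y) * a
    calc a * (1 - a * y) = a - a ^ 2 * y := by noncomm_ring
      _ = a - a * y * a := by rw [← h1]
      _ = (1 - a * y) * a := by noncomm_ring
  have hq' : IsQuasinilpotentElem (a * (1 - a * y)) := by
    have : a * (1 - a * y) = a - a ^ 2 * y := by noncomm_ring
    rw [this, ← h1]
    have : a - a * y * a = a - a * y * a := rfl
    exact hq
  -- y = a^n * y^(n+1)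
  have hyn : ∀ n : ℕ, y = a ^ n * y ^ (n + 1) := by
    intro n
    induction n with
    | zero => simp
    | succ n ih =>
      have hstep : a * y ^ (n + 2) = y ^ (n + 1) := by
        have hp : y ^ (n + 2) = y ^ 2 * y ^ n := by rw [Nat.add_comm n 2, pow_add]
        calc a * y ^ (n + 2) = (a * y ^ 2) * y ^ n := by rw [hp, ← mul_assoc]
          _ = y * y ^ n := by rw [h2]
          _ = y ^ (n + 1) := by rw [pow_succ']
      calc y = a ^ n * y ^ (n + 1) := ih
        _ = a ^ n * (a * y ^ (n + 2)) := by rw [hstep]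
        _ = a ^ (n + 1) * y ^ (n + 2) := by rw [← mul_assoc, ← pow_succ]
  have key : ∀ n : ℕ, (1 - a * y) * w * (a * y)
      = (a * (1 - a * y)) ^ (n + 1) * (w * y ^ (n + 1)) := by
    intro n
    have hwa : w * a ^ (n + 1) = a ^ (n + 1) * w := (Commute.pow_right hw (n + 1))
    have hpa : (1 - a * y) * a ^ (n + 1) = (a * (1 - a * y)) ^ (n + 1) := by
      rw [hcomm.mul_pow, hpp.pow_succ_eq]; exact (hcomm.symm.pow_right (n + 1)).eq
    calc (1 - a * y) * w * (a * y)
        = (1 - a * y) * w * (a * (a ^ n * y ^ (n + 1))) := by rw [← hyn n]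
      _ = (1 - a * y) * (w * a ^ (n + 1)) * y ^ (n + 1) := by
          rw [← mul_assoc a, ← pow_succ', ← mul_assoc, ← mul_assoc, mul_assoc (1 - a * y)]
      _ = (1 - a * y) * a ^ (n + 1) * (w * y ^ (n + 1)) := by
          rw [hwa, ← mul_assoc, mul_assoc ((1 - a * y) * a ^ (n + 1))]
      _ = (a * (1 - a * y)) ^ (n + 1) * (w * y ^ (n + 1)) := by rw [hpa]
  have hz : (1 - a * y) * w * (a * y) = 0 := by
    apply hq'.eq_zero_of_le ‖y‖ ‖w‖ (norm_nonneg _) (norm_nonneg _)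
    intro n hn
    obtain ⟨m, rfl⟩ : ∃ m, n = m + 1 := ⟨n - 1, by omega⟩
    rw [key m]
    calc ‖(a * (1 - a * y)) ^ (m + 1) * (w * y ^ (m + 1))‖
        ≤ ‖(a * (1 - a * y)) ^ (m + 1)‖ * ‖w * y ^ (m + 1)‖ := norm_mul_le _ _
      _ ≤ ‖(a * (1 - a * y)) ^ (m + 1)‖ * (‖w‖ * ‖y ^ (m + 1)‖) := by
          gcongr; exact norm_mul_le _ _
      _ ≤ ‖(a * (1 - a * y)) ^ (m + 1)‖ * (‖w‖ * ‖y‖ ^ (m + 1)) := by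
          gcongr; exact norm_pow_le' y (by omega)
      _ = ‖w‖ * (‖y‖ ^ (m + 1) * ‖(a * (1 - a * y)) ^ (m + 1)‖) := by ring
  have : (1 - a * y) * w * (1 - a * y) = (1 - a * y) * w - (1 - a * y) * w * (a * y) := by
    noncomm_ring
  rw [this, hz, sub_zero]

/-- Theorem 2.18: (i) if `x` is a left generalized Drazin inverse of `a` with
left spectral idempotent `p = 1 - xa`, then `wp = pwp` for every `w` commuting
with `a`; (ii) dually with `p = 1 - ay`, `pw = pwp`; (iii) if `a` is generalized
Drazin invertible with spectral idempotent `p = 1 - xa`, then `wp = pw` for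
every `w` commuting with `a`. -/
theorem spectral_idempotent_commutant {A : Type*} [NormedRing A] [CompleteSpace A]
    (a : A) :
    (∀ x : A, a * x * a = x * a ^ 2 → x ^ 2 * a = x →
      IsQuasinilpotentElem (a - a * x * a) →
      ∀ w : A, w * a = a * w →
        w * (1 - x * a) = (1 - x * a) * w * (1 - x * a)) ∧
    (∀ y : A, a * y * a = a ^ 2 * y → a * y ^ 2 = y →
      IsQuasinilpotentElem (a - a * y * a) →
      ∀ w : A, w * a = a * w →
        (1 - a * y) * w = (1 - a * y) * w * (1 - a * y)) ∧
    (∀ x : A, a * x = x * a → x ^ 2 * a = x →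
      IsQuasinilpotentElem (a - a * x * a) →
      ∀ w : A, w * a = a * w →
        w * (1 - x * a) = (1 - x * a) * w) := by
  refine ⟨fun x h1 h2 hq w hw => left_gdrazin_case a x h1 h2 hq w hw,
    fun y h1 h2 hq w hw => right_gdrazin_case a y h1 h2 hq w hw, ?_⟩
  intro x hc h2 hq w hw
  have h1 : a * x * a = x * a ^ 2 := by
    rw [hc, pow_two, mul_assoc]
  have h1' : a * x * a = a ^ 2 * x := by
    calc a * x * a = a * (x * a) := by rw [mul_assoc]
      _ = a * (a * x) := by rw [← hc]
      _ = a ^ 2 * x := by rw [← mul_assoc, ← pow_two]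
  have h2' : a * x ^ 2 = x := by
    calc a * x ^ 2 = (a * x) * x := by noncomm_ring
      _ = (x * a) * x := by rw [hc]
      _ = x * (a * x) := by rw [mul_assoc]
      _ = x * (x * a) := by rw [hc]
      _ = x ^ 2 * a := by noncomm_ring
      _ = x := h2
  have hi := left_gdrazin_case a x h1 h2 hq w hw
  have hii := right_gdrazin_case a x h1' h2' hq w hw
  rw [hc] at hii
  rw [hi, ← hii]
end

section
/- Let X be a complex Banach space and T ∈ B(X). The following statements are equivalent: (i) there exists S ∈ B(X) such that TST = ST², S²T = S and TST − T is quasi-nilpotent; (ii) there exists a projection P ∈ B(X) such that TP = PT, T + P is left invertible, and TP is quasi-nilpotent; (iii) there exist two closed subspaces M and N reducing T such that T|_M is left invertible (as an operator on M) and T|_N is quasi-nilpotent (as an operator on N). -/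
open Filter Topology

/-- A bounded operator is quasi-nilpotent: `‖Qⁿ‖^{1/n} → 0`. -/
def IsQuasinilpotentOp {E : Type*} [NormedAddCommGroup E] [NormedSpace ℂ E]
    (Q : E →L[ℂ] E) : Prop :=
  Tendsto (fun n : ℕ => ‖Q ^ n‖ ^ ((1 : ℝ) / n)) atTop (𝓝 0)

/-!
Put `P = 1 - ST`. The two identities for `S` make `P` an idempotent commuting with `T` with
`TP = T - TST` and `(S + P)(T + P) = 1 + PT`; the right side is invertible because `PT` is
quasi-nilpotent. Conversely, if `R(T + P) = 1` then `S = R(1 - P)` satisfies `ST = 1 - P`, from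
which the identities for `S` follow.

An idempotent `P` commuting with `T` splits `X = ker P ⊕ range P` into closed `T`-invariant
subspaces, on which `R(T + P) = 1` restricts to a left inverse of `T` and `TP` restricts to `T`.
Conversely, conjugating by `X ≃ M × N` turns pairs of operators on `M` and `N` into a ring
homomorphism to `B(X)`; there `T = (T_M, T_N)`, `P = (0, 1)`, `T + P = (T_M, 1 + T_N)` has the
left inverse `(R_M, (1 + T_N)⁻¹)`, and `(TP)ⁿ = (0, T_Nⁿ)`.
-/

section Ring

variable {A : Type*} [Ring A] {T S P R : A}

theorem commute_one_sub_mul_of_mul_mul_eq (h : T * S * T = S * T ^ 2) :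
    Commute T (1 - S * T) := by
  simp only [Commute, SemiconjBy, mul_sub, sub_mul, mul_one, one_mul, ← mul_assoc, h, sq]

theorem mul_one_sub_mul_eq_zero (h : S ^ 2 * T = S) : S * (1 - S * T) = 0 := by
  rw [mul_sub, mul_one, ← mul_assoc, ← sq, h, sub_self]

theorem isIdempotentElem_one_sub_mul (h₁ : T * S * T = S * T ^ 2) (h₂ : S ^ 2 * T = S) :
    IsIdempotentElem (1 - S * T) := by
  have hST : S * T * (S * T) = S * T := by
    calc S * T * (S * T) = S * (T * S * T) := by noncomm_ring
      _ = S ^ 2 * T * T := by rw [h₁]; noncomm_ring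
      _ = S * T := by rw [h₂]
  simp only [IsIdempotentElem, mul_sub, sub_mul, mul_one, one_mul, hST, sub_self, sub_zero]

theorem add_mul_add_one_sub_mul (h₁ : T * S * T = S * T ^ 2) (h₂ : S ^ 2 * T = S) :
    (S + (1 - S * T)) * (T + (1 - S * T)) = 1 + (1 - S * T) * T := by
  have hP := isIdempotentElem_one_sub_mul h₁ h₂
  calc (S + (1 - S * T)) * (T + (1 - S * T))
        = S * T + S * (1 - S * T) + (1 - S * T) * T + (1 - S * T) * (1 - S * T) := by
          noncomm_ring
    _ = 1 + (1 - S * T) * T := by rw [mul_one_sub_mul_eq_zero h₂, hP.eq]; abel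

theorem mul_one_sub_mul_eq_one_sub (hP : IsIdempotentElem P) (hTP : Commute T P)
    (hR : R * (T + P) = 1) : R * (1 - P) * T = 1 - P := by
  have : (T + P) * (1 - P) = (1 - P) * T := by
    rw [add_mul, mul_sub, mul_sub, mul_one, mul_one, hP.eq, sub_self, add_zero, sub_mul,
      one_mul, hTP.eq]
  rw [mul_assoc, ← this, ← mul_assoc, hR, one_mul]

end Ring

namespace ContinuousLinearMap

variable {R : Type*} [Ring R] {E F : Type*} [TopologicalSpace E] [AddCommGroup E] [Module R E]
  [IsTopologicalAddGroup E] [TopologicalSpace F] [AddCommGroup F] [Module R F]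
  [IsTopologicalAddGroup F]

@[simps]
def prodMapRingHom : (E →L[R] E) × (F →L[R] F) →+* (E × F →L[R] E × F) where
  toFun p := p.1.prodMap p.2
  map_one' := rfl
  map_mul' _ _ := rfl
  map_zero' := rfl
  map_add' _ _ := rfl

theorem coe_restrict_pow_apply {Q : E →L[R] E} {N : Submodule R E} (hQ : ∀ x ∈ N, Q x ∈ N)
    (n : ℕ) (x : N) : ((Q.restrict hQ ^ n) x : E) = (Q ^ n) x := by
  induction n generalizing x with
  | zero => rfl
  | succ n ih => rw [pow_succ, pow_succ, mul_apply_eq_comp, mul_apply_eq_comp, ih]; rfl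

end ContinuousLinearMap

theorem Submodule.ClosedComplemented.exists_mul_restrict_eq_one {R : Type*} [Ring R]
    {E : Type*} [TopologicalSpace E] [AddCommGroup E] [Module R E] {M : Submodule R E}
    (hM : M.ClosedComplemented) {T L : E →L[R] E} (hT : ∀ x ∈ M, T x ∈ M)
    (hLT : ∀ x ∈ M, L (T x) = x) : ∃ LM : M →L[R] M, LM * T.restrict hT = 1 := by
  obtain ⟨π, hπ⟩ := hM
  exact ⟨π ∘L L ∘L M.subtypeL, by ext x; simp [hLT x x.2, hπ]⟩

namespace IsQuasinilpotentOp

variable {E F : Type*} [NormedAddCommGroup E] [NormedSpace ℂ E]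
  [NormedAddCommGroup F] [NormedSpace ℂ F]

theorem of_norm_pow_le {A : E →L[ℂ] E} {B : F →L[ℂ] F} (hB : IsQuasinilpotentOp B) (C : ℝ)
    (h : ∀ᶠ n in atTop, ‖A ^ n‖ ≤ C * ‖B ^ n‖) : IsQuasinilpotentOp A := by
  set D := max C 1
  have hD : 0 < D := zero_lt_one.trans_le (le_max_right _ _)
  have hD_root : Tendsto (fun n : ℕ => D ^ ((1 : ℝ) / n)) atTop (𝓝 1) := by
    simpa using tendsto_const_nhds.rpow tendsto_one_div_atTop_nhds_zero_nat (.inl hD.ne')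
  have hbound : Tendsto (fun n : ℕ => D ^ ((1 : ℝ) / n) * ‖B ^ n‖ ^ ((1 : ℝ) / n)) atTop
      (𝓝 0) := by
    simpa using hD_root.mul hB
  refine squeeze_zero' (.of_forall fun n => by positivity) ?_ hbound
  filter_upwards [h] with n hn
  calc ‖A ^ n‖ ^ ((1 : ℝ) / n) ≤ (D * ‖B ^ n‖) ^ ((1 : ℝ) / n) := by
        gcongr
        exact hn.trans (by gcongr; exact le_max_left _ _)
    _ = D ^ ((1 : ℝ) / n) * ‖B ^ n‖ ^ ((1 : ℝ) / n) := Real.mul_rpow hD.le (norm_nonneg _)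

theorem neg {Q : E →L[ℂ] E} (hQ : IsQuasinilpotentOp Q) : IsQuasinilpotentOp (-Q) :=
  hQ.of_norm_pow_le 1 <| .of_forall fun n => by
    rw [← neg_one_smul ℂ Q, smul_pow, norm_smul, norm_pow, norm_neg, norm_one, one_pow]

theorem restrict {N : Submodule ℂ E} {Q : E →L[ℂ] E} (hQ : IsQuasinilpotentOp Q)
    (hN : ∀ x ∈ N, Q x ∈ N) : IsQuasinilpotentOp (Q.restrict hN) :=
  hQ.of_norm_pow_le 1 <| .of_forall fun n => by
    rw [one_mul]
    refine ContinuousLinearMap.opNorm_le_bound _ (norm_nonneg _) fun x => ?_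
    rw [← Submodule.norm_coe, ContinuousLinearMap.coe_restrict_pow_apply]
    exact (Q ^ n).le_opNorm x

theorem spectralRadius_eq_zero [CompleteSpace E] {Q : E →L[ℂ] E} (hQ : IsQuasinilpotentOp Q) :
    spectralRadius ℂ Q = 0 := by
  have := ENNReal.tendsto_ofReal hQ
  rw [ENNReal.ofReal_zero] at this
  exact tendsto_nhds_unique (spectrum.pow_norm_pow_one_div_tendsto_nhds_spectralRadius Q) this

theorem isUnit_one_add [CompleteSpace E] {Q : E →L[ℂ] E} (hQ : IsQuasinilpotentOp Q) :
    IsUnit (1 + Q) := by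
  simpa using spectrum.isUnit_one_sub_smul_of_lt_inv_radius (a := Q) (z := (-1 : ℂ))
    (by simp [hQ.spectralRadius_eq_zero])

end IsQuasinilpotentOp

namespace Submodule.IsTopCompl

variable {X : Type*} [NormedAddCommGroup X] [NormedSpace ℂ X] {M N : Submodule ℂ X}
  (h : M.IsTopCompl N)

noncomputable def blockDiag : (M →L[ℂ] M) × (N →L[ℂ] N) →+* (X →L[ℂ] X) :=
  (prodEquivOfIsTopCompl M N h).conjContinuousAlgEquiv.toRingHom.comp
    ContinuousLinearMap.prodMapRingHom

theorem blockDiag_apply_add (p : (M →L[ℂ] M) × (N →L[ℂ] N)) (x : M) (y : N) :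
    h.blockDiag p (x + y) = p.1 x + p.2 y := by
  have := (prodEquivOfIsTopCompl M N h).symm_apply_apply (x, y)
  simp_all [blockDiag, prodEquivOfIsTopCompl_apply]

theorem eq_blockDiag {T : X →L[ℂ] X} {TM : M →L[ℂ] M} {TN : N →L[ℂ] N}
    (hTM : ∀ x : M, (TM x : X) = T x) (hTN : ∀ x : N, (TN x : X) = T x) :
    T = h.blockDiag (TM, TN) := by
  ext z
  obtain ⟨⟨x, y⟩, rfl⟩ := (prodEquivOfIsTopCompl M N h).surjective z
  simp [prodEquivOfIsTopCompl_apply, blockDiag_apply_add, hTM, hTN]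

theorem exists_norm_blockDiag_zero_le :
    ∃ C : ℝ, ∀ B : N →L[ℂ] N, ‖h.blockDiag (0, B)‖ ≤ C * ‖B‖ := by
  set e := prodEquivOfIsTopCompl M N h
  refine ⟨‖(e : M × N →L[ℂ] X)‖ * ‖(e.symm : X →L[ℂ] M × N)‖, fun B => ?_⟩
  have hB : ‖(0 : M →L[ℂ] M).prodMap B‖ ≤ ‖B‖ :=
    ContinuousLinearMap.opNorm_le_bound _ (norm_nonneg B) fun z => by
      simpa [Prod.norm_def] using B.le_opNorm_of_le (norm_snd_le z)
  calc ‖h.blockDiag (0, B)‖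
      = ‖(e : M × N →L[ℂ] X) ∘L (0 : M →L[ℂ] M).prodMap B ∘L
          (e.symm : X →L[ℂ] M × N)‖ := rfl
    _ ≤ ‖(e : M × N →L[ℂ] X)‖ * ‖B‖ * ‖(e.symm : X →L[ℂ] M × N)‖ := by
        refine (ContinuousLinearMap.opNorm_comp_le _ _).trans ?_
        rw [mul_assoc]
        gcongr
        exact (ContinuousLinearMap.opNorm_comp_le _ _).trans (by gcongr)
    _ = ‖(e : M × N →L[ℂ] X)‖ * ‖(e.symm : X →L[ℂ] M × N)‖ * ‖B‖ := by ring

theorem _root_.IsQuasinilpotentOp.blockDiag_zero {B : N →L[ℂ] N}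
    (hB : IsQuasinilpotentOp B) : IsQuasinilpotentOp (h.blockDiag (0, B)) := by
  obtain ⟨C, hC⟩ := h.exists_norm_blockDiag_zero_le
  refine hB.of_norm_pow_le C ?_
  filter_upwards [eventually_ge_atTop 1] with n hn
  rw [← map_pow, Prod.pow_mk, zero_pow (by omega)]
  exact hC _

end Submodule.IsTopCompl

section LeftGeneralizedDrazin

variable {X : Type*} [NormedAddCommGroup X] [NormedSpace ℂ X] {T : X →L[ℂ] X}

theorem exists_projection_of_exists_leftGenDrazin [CompleteSpace X]
    (h : ∃ S : X →L[ℂ] X, T * S * T = S * T ^ 2 ∧ S ^ 2 * T = S ∧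
      IsQuasinilpotentOp (T * S * T - T)) :
    ∃ P : X →L[ℂ] X, P * P = P ∧ T * P = P * T ∧
      (∃ R : X →L[ℂ] X, R * (T + P) = 1) ∧ IsQuasinilpotentOp (T * P) := by
  obtain ⟨S, h₁, h₂, hq⟩ := h
  have hTP : T * (1 - S * T) = -(T * S * T - T) := by noncomm_ring
  have hq' : IsQuasinilpotentOp (T * (1 - S * T)) := hTP ▸ hq.neg
  have hunit : IsUnit (1 + (1 - S * T) * T) :=
    (commute_one_sub_mul_of_mul_mul_eq h₁).eq ▸ hq'.isUnit_one_add
  refine ⟨1 - S * T, isIdempotentElem_one_sub_mul h₁ h₂,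
    commute_one_sub_mul_of_mul_mul_eq h₁, ⟨↑hunit.unit⁻¹ * (S + (1 - S * T)), ?_⟩, hq'⟩
  rw [mul_assoc, add_mul_add_one_sub_mul h₁ h₂, hunit.val_inv_mul]

theorem exists_leftGenDrazin_of_exists_projection
    (h : ∃ P : X →L[ℂ] X, P * P = P ∧ T * P = P * T ∧
      (∃ R : X →L[ℂ] X, R * (T + P) = 1) ∧ IsQuasinilpotentOp (T * P)) :
    ∃ S : X →L[ℂ] X, T * S * T = S * T ^ 2 ∧ S ^ 2 * T = S ∧
      IsQuasinilpotentOp (T * S * T - T) := by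
  obtain ⟨P, hP, hTP, ⟨R, hR⟩, hq⟩ := h
  have hST : R * (1 - P) * T = 1 - P := mul_one_sub_mul_eq_one_sub hP hTP hR
  have hTST : T * (R * (1 - P)) * T = T * (1 - P) := by rw [mul_assoc, hST]
  refine ⟨R * (1 - P), ?_, ?_, ?_⟩
  · rw [hTST, sq, ← mul_assoc, hST, ((Commute.one_right T).sub_right hTP).eq]
  · rw [sq, mul_assoc, hST, mul_assoc, IsIdempotentElem.one_sub hP]
  · rw [hTST, mul_sub, mul_one, sub_sub_cancel_left]
    exact hq.neg

theorem exists_reducing_of_exists_projection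
    (h : ∃ P : X →L[ℂ] X, P * P = P ∧ T * P = P * T ∧
      (∃ R : X →L[ℂ] X, R * (T + P) = 1) ∧ IsQuasinilpotentOp (T * P)) :
    ∃ M N : Submodule ℂ X, IsClosed (M : Set X) ∧ IsClosed (N : Set X) ∧ IsCompl M N ∧
      (∃ TM : M →L[ℂ] M, (∀ x : M, (TM x : X) = T x) ∧
        ∃ RM : M →L[ℂ] M, RM * TM = 1) ∧
      (∃ TN : N →L[ℂ] N, (∀ x : N, (TN x : X) = T x) ∧ IsQuasinilpotentOp TN) := by
  obtain ⟨P, hP, hTP, ⟨R, hR⟩, hq⟩ := h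
  have hMN : P.ker.IsTopCompl P.range :=
    (ContinuousLinearMap.IsIdempotentElem.isTopCompl hP).symm
  have hker : ∀ x ∈ P.ker, T x ∈ P.ker := fun x hx => by
    rw [LinearMap.mem_ker, ContinuousLinearMap.coe_coe] at hx ⊢
    rw [← mul_apply_eq_comp, ← hTP, mul_apply_eq_comp, hx, map_zero]
  have hrange : ∀ x ∈ P.range, (T * P) x ∈ P.range := fun x _ => by
    rw [hTP]; exact ⟨T x, rfl⟩
  have hRT : ∀ x ∈ P.ker, R (T x) = x := fun x hx => by
    rw [LinearMap.mem_ker, ContinuousLinearMap.coe_coe] at hx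
    simpa [mul_apply_eq_comp, hx] using congr($hR x)
  have hPx : ∀ x ∈ P.range, P x = x := fun x hx =>
    LinearMap.IsIdempotentElem.mem_range_iff
      (ContinuousLinearMap.IsIdempotentElem.toLinearMap hP) |>.mp hx
  refine ⟨P.ker, P.range, P.isClosed_ker, hMN.isClosed', hMN.isCompl,
    ⟨T.restrict hker, fun _ => rfl, hMN.closedComplemented.exists_mul_restrict_eq_one hker hRT⟩,
    ⟨(T * P).restrict hrange, fun x => ?_, hq.restrict hrange⟩⟩
  rw [ContinuousLinearMap.coe_restrict_apply, mul_apply_eq_comp, hPx x x.2]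

theorem exists_projection_of_exists_reducing [CompleteSpace X]
    (h : ∃ M N : Submodule ℂ X, IsClosed (M : Set X) ∧ IsClosed (N : Set X) ∧
      IsCompl M N ∧
      (∃ TM : M →L[ℂ] M, (∀ x : M, (TM x : X) = T x) ∧
        ∃ RM : M →L[ℂ] M, RM * TM = 1) ∧
      (∃ TN : N →L[ℂ] N, (∀ x : N, (TN x : X) = T x) ∧ IsQuasinilpotentOp TN)) :
    ∃ P : X →L[ℂ] X, P * P = P ∧ T * P = P * T ∧
      (∃ R : X →L[ℂ] X, R * (T + P) = 1) ∧ IsQuasinilpotentOp (T * P) := by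
  obtain ⟨M, N, hM, hN, hMN, ⟨TM, hTM, RM, hRM⟩, ⟨TN, hTN, hq⟩⟩ := h
  have h := Submodule.IsCompl.isTopCompl_of_isClosed hMN hM hN
  have hT := h.eq_blockDiag hTM hTN
  have hunit := hq.isUnit_one_add
  refine ⟨h.blockDiag (0, 1), ?_, ?_, ⟨h.blockDiag (RM, ↑hunit.unit⁻¹), ?_⟩, ?_⟩
  · rw [← map_mul]; simp
  · rw [hT, ← map_mul, ← map_mul]; simp
  · rw [hT, ← map_add, ← map_mul, ← map_one h.blockDiag]
    congr 1
    simp [hRM, add_comm TN, hunit.val_inv_mul]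
  · rw [hT, ← map_mul]
    simpa using hq.blockDiag_zero h

end LeftGeneralizedDrazin

/-- Theorem 3.7: for `T ∈ B(X)` the following are equivalent:
(i) there is `S` with `TST = ST²`, `S²T = S` and `TST - T` quasi-nilpotent
(i.e. `T` is left generalized Drazin invertible);
(ii) there is a projection `P` commuting with `T` such that `T + P` is left
invertible and `TP` is quasi-nilpotent;
(iii) there are closed subspaces `M`, `N` reducing `T` with `T|_M` left
invertible and `T|_N` quasi-nilpotent. -/
theorem left_generalized_drazin_operator_iff {X : Type*}
    [NormedAddCommGroup X] [NormedSpace ℂ X] [CompleteSpace X] (T : X →L[ℂ] X) :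
    ((∃ S : X →L[ℂ] X, T * S * T = S * T ^ 2 ∧ S ^ 2 * T = S ∧
        IsQuasinilpotentOp (T * S * T - T)) ↔
      (∃ P : X →L[ℂ] X, P * P = P ∧ T * P = P * T ∧
        (∃ R : X →L[ℂ] X, R * (T + P) = 1) ∧ IsQuasinilpotentOp (T * P))) ∧
    ((∃ S : X →L[ℂ] X, T * S * T = S * T ^ 2 ∧ S ^ 2 * T = S ∧
        IsQuasinilpotentOp (T * S * T - T)) ↔
      (∃ M N : Submodule ℂ X, IsClosed (M : Set X) ∧ IsClosed (N : Set X) ∧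
        IsCompl M N ∧
        (∃ TM : M →L[ℂ] M, (∀ x : M, (TM x : X) = T x) ∧
          ∃ RM : M →L[ℂ] M, RM * TM = 1) ∧
        (∃ TN : N →L[ℂ] N, (∀ x : N, (TN x : X) = T x) ∧
          IsQuasinilpotentOp TN))) := by
  have h₁₂ := Iff.intro exists_projection_of_exists_leftGenDrazin
    (exists_leftGenDrazin_of_exists_projection (T := T))
  exact ⟨h₁₂, h₁₂.trans ⟨exists_reducing_of_exists_projection,
    exists_projection_of_exists_reducing⟩⟩
end

section
/- Let X be a Banach space and let L₁, L₂, L₃, L₄ be closed subspaces of X with L₁ ⊆ L₃, L₂ ⊆ L₄, L₁ =ᵉ L₂ and L₃ =ᵉ L₄. Then L₁ is topologically complemented in L₃ if and only if L₂ is topologically complemented in L₄. -/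
/-- `L ⊂ᵉ L'`: `L` is essentially contained in `L'`, i.e. `L ⊆ L' + M` for some
finite-dimensional subspace `M` of `X`. -/
def EssentiallyLE {X : Type*} [NormedAddCommGroup X] [NormedSpace ℂ X]
    (L L' : Submodule ℂ X) : Prop :=
  ∃ M : Submodule ℂ X, FiniteDimensional ℂ M ∧ L ≤ L' ⊔ M

/-- `L₁` is topologically complemented in `L₃`: there is a closed subspace `W`
of `X` contained in `L₃` with `L₁ ∩ W = 0` and `L₁ + W = L₃`. -/
def TopComplementedIn {X : Type*} [NormedAddCommGroup X] [NormedSpace ℂ X]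
    (L₁ L₃ : Submodule ℂ X) : Prop :=
  ∃ W : Submodule ℂ X, IsClosed (W : Set X) ∧ W ≤ L₃ ∧ L₁ ⊓ W = ⊥ ∧ L₁ ⊔ W = L₃

section Aux

variable {X : Type*} [NormedAddCommGroup X] [NormedSpace ℂ X]

/-- If `V` is disjoint from `N` and contained in `L`, and the image of `L` in `X/N`
is finite-dimensional, then `V` is finite-dimensional. -/
lemma fdAux {N L V : Submodule ℂ X} (hVN : V ⊓ N = ⊥) (hVL : V ≤ L)
    (hfd : FiniteDimensional ℂ (L.map N.mkQ)) : FiniteDimensional ℂ V := by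
  have hmem : ∀ x : V, N.mkQ (V.subtype x) ∈ L.map N.mkQ :=
    fun x => ⟨x.1, hVL x.2, rfl⟩
  refine FiniteDimensional.of_injective
    (LinearMap.codRestrict (L.map N.mkQ) ((N.mkQ).comp V.subtype) hmem) ?_
  intro a b hab
  have h : N.mkQ (a.1 - b.1) = 0 := by
    have := congrArg Subtype.val hab
    simp only [LinearMap.codRestrict_apply, LinearMap.comp_apply] at this
    rw [map_sub, sub_eq_zero]
    exact this
  have hN : a.1 - b.1 ∈ N := by
    rwa [Submodule.mkQ_apply, Submodule.Quotient.mk_eq_zero] at h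
  have hV : a.1 - b.1 ∈ V := sub_mem a.2 b.2
  have : a.1 - b.1 ∈ V ⊓ N := ⟨hV, hN⟩
  rw [hVN] at this
  exact Subtype.ext (sub_eq_zero.mp this)

/-- Any subspace has an algebraic complement inside a larger subspace. -/
lemma existsAlgCompl {N L : Submodule ℂ X} (h : N ≤ L) :
    ∃ F : Submodule ℂ X, F ≤ L ∧ N ⊓ F = ⊥ ∧ N ⊔ F = L := by
  obtain ⟨F', hF'⟩ := Submodule.exists_isCompl (N.comap L.subtype)
  refine ⟨F'.map L.subtype, Submodule.map_subtype_le _ _, ?_, ?_⟩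
  · rw [eq_bot_iff]
    rintro x ⟨hxN, hxF⟩
    obtain ⟨y, hyF', hyx⟩ := hxF
    have hyN : y ∈ N.comap L.subtype := by
      simpa [Submodule.mem_comap, hyx] using hxN
    have : y ∈ N.comap L.subtype ⊓ F' := ⟨hyN, hyF'⟩
    rw [hF'.inf_eq_bot, Submodule.mem_bot] at this
    simp [← hyx, this]
  · have hmap : (N.comap L.subtype).map L.subtype = N := by
      rw [Submodule.map_comap_subtype, inf_eq_right.mpr h]
    rw [← hmap, ← Submodule.map_sup, hF'.sup_eq_top, Submodule.map_subtype_top]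

/-- A finite-dimensional subspace of a closed subspace of a Banach space has a
closed complement inside it. -/
lemma existsClosedCompl [CompleteSpace X] {V W : Submodule ℂ X}
    (hW : IsClosed (W : Set X)) (hVW : V ≤ W) (hV : FiniteDimensional ℂ V) :
    ∃ W' : Submodule ℂ X, IsClosed (W' : Set X) ∧ W' ≤ W ∧ V ⊓ W' = ⊥ ∧ V ⊔ W' = W := by
  haveI : CompleteSpace W := hW.completeSpace_coe
  set V' : Submodule ℂ W := V.comap W.subtype with hV'def
  haveI : FiniteDimensional ℂ V' :=
    (Submodule.comapSubtypeEquivOfLe hVW).symm.finiteDimensional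
  obtain ⟨Q, hQclosed, hQcompl⟩ :=
    (Submodule.ClosedComplemented.of_finiteDimensional V').exists_isClosed_isCompl
  refine ⟨Q.map W.subtype, ?_, Submodule.map_subtype_le _ _, ?_, ?_⟩
  · have : (Q.map W.subtype : Set X) = Subtype.val '' (Q : Set W) := by
      ext x; simp [Submodule.mem_map]
    rw [this]
    exact hW.isClosedEmbedding_subtypeVal.isClosedMap _ hQclosed
  · rw [eq_bot_iff]
    rintro x ⟨hxV, hxQ⟩
    obtain ⟨y, hyQ, hyx⟩ := hxQ
    have hyV' : y ∈ V' := by simpa [hV'def, Submodule.mem_comap, hyx] using hxV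
    have : y ∈ V' ⊓ Q := ⟨hyV', hyQ⟩
    rw [hQcompl.inf_eq_bot, Submodule.mem_bot] at this
    simp [← hyx, this]
  · have hmap : V'.map W.subtype = V := by
      rw [hV'def, Submodule.map_comap_subtype, inf_eq_right.mpr hVW]
    rw [← hmap, ← Submodule.map_sup, hQcompl.sup_eq_top, Submodule.map_subtype_top]

/-- The sum of a closed subspace and a finite-dimensional subspace is closed. -/
lemma closedSup (W F : Submodule ℂ X) (hW : IsClosed (W : Set X))
    (hF : FiniteDimensional ℂ F) : IsClosed ((W ⊔ F : Submodule ℂ X) : Set X) := by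
  haveI : IsClosed (W : Set X) := hW
  haveI : FiniteDimensional ℂ (F.map W.mkQ) := Module.Finite.map _ _
  have hset : ((W ⊔ F : Submodule ℂ X) : Set X) = W.mkQ ⁻¹' (F.map W.mkQ : Set (X ⧸ W)) := by
    have : Submodule.comap W.mkQ (F.map W.mkQ) = W ⊔ F := Submodule.comap_map_mkQ W F
    rw [← this]; rfl
  rw [hset]
  exact ((F.map W.mkQ).closed_of_finiteDimensional).preimage continuous_quot_mk

/-- Varying the smaller subspace by a finite-dimensional amount. -/
lemma lemA [CompleteSpace X] {N L T : Submodule ℂ X}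
    (hNL : N ≤ L) (hLT : L ≤ T)
    (hfd : FiniteDimensional ℂ (L.map N.mkQ)) :
    TopComplementedIn L T ↔ TopComplementedIn N T := by
  constructor
  · rintro ⟨W, hWc, hWT, hLW, hLWT⟩
    obtain ⟨F, hFL, hNF, hNFL⟩ := existsAlgCompl hNL
    have hFfd : FiniteDimensional ℂ F := fdAux (by rw [inf_comm]; exact hNF) hFL hfd
    refine ⟨F ⊔ W, ?_, sup_le (hFL.trans hLT) hWT, ?_, ?_⟩
    · rw [sup_comm]; exact closedSup W F hWc hFfd
    · rw [eq_bot_iff]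
      rintro x ⟨hxN, hxFW⟩
      obtain ⟨f, hf, w, hw, rfl⟩ := Submodule.mem_sup.mp hxFW
      have hLmem : f + w - f ∈ L ⊓ W := by
        refine ⟨?_, by simpa using hw⟩
        exact sub_mem (hNL hxN) (hFL hf)
      rw [hLW] at hLmem
      have hw0 : w = 0 := by simpa using hLmem
      have : f + w ∈ N ⊓ F := ⟨hxN, by simpa [hw0] using hf⟩
      rw [hNF] at this
      exact this
    · rw [← sup_assoc, hNFL, hLWT]
  · rintro ⟨W, hWc, hWT, hNW, hNWT⟩
    have hVfd : FiniteDimensional ℂ ↥(L ⊓ W) := by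
      refine fdAux (N := N) ?_ inf_le_left hfd
      rw [eq_bot_iff]
      rintro x ⟨⟨_, hxW⟩, hxN⟩
      have : x ∈ N ⊓ W := ⟨hxN, hxW⟩
      rwa [hNW] at this
    obtain ⟨W', hW'c, hW'W, hVW', hVW'W⟩ := existsClosedCompl hWc inf_le_right hVfd
    refine ⟨W', hW'c, hW'W.trans hWT, ?_, ?_⟩
    · rw [eq_bot_iff]
      rintro x ⟨hxL, hxW'⟩
      have : x ∈ (L ⊓ W) ⊓ W' := ⟨⟨hxL, hW'W hxW'⟩, hxW'⟩
      rwa [hVW'] at this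
    · refine le_antisymm (sup_le hLT ((hW'W.trans hWT))) ?_
      calc T = N ⊔ W := hNWT.symm
        _ = N ⊔ ((L ⊓ W) ⊔ W') := by rw [hVW'W]
        _ ≤ L ⊔ W' := sup_le (le_sup_of_le_left hNL)
            (sup_le (le_sup_of_le_left inf_le_left) le_sup_right)

/-- Varying the larger subspace by a finite-dimensional amount. -/
lemma lemB [CompleteSpace X] {L S T : Submodule ℂ X}
    (hS : IsClosed (S : Set X)) (hLS : L ≤ S) (hST : S ≤ T)
    (hfd : FiniteDimensional ℂ (T.map S.mkQ)) :
    TopComplementedIn L T ↔ TopComplementedIn L S := by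
  constructor
  · rintro ⟨W, hWc, hWT, hLW, hLWT⟩
    refine ⟨W ⊓ S, hWc.inter hS, inf_le_right, ?_, ?_⟩
    · rw [eq_bot_iff]
      rintro x ⟨hxL, hxW, _⟩
      have : x ∈ L ⊓ W := ⟨hxL, hxW⟩
      rwa [hLW] at this
    · refine le_antisymm (sup_le hLS inf_le_right) ?_
      intro x hxS
      have hxT : x ∈ L ⊔ W := by rw [hLWT]; exact hST hxS
      obtain ⟨l, hl, w, hw, rfl⟩ := Submodule.mem_sup.mp hxT
      have hwS : w ∈ S := by
        have : l + w - l ∈ S := sub_mem hxS (hLS hl)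
        simpa using this
      exact Submodule.mem_sup.mpr ⟨l, hl, w, ⟨hw, hwS⟩, rfl⟩
  · rintro ⟨W, hWc, hWS, hLW, hLWS⟩
    obtain ⟨F, hFT, hSF, hSFT⟩ := existsAlgCompl hST
    have hFfd : FiniteDimensional ℂ F := fdAux (by rw [inf_comm]; exact hSF) hFT hfd
    refine ⟨W ⊔ F, closedSup W F hWc hFfd, sup_le (hWS.trans hST) hFT, ?_, ?_⟩
    · rw [eq_bot_iff]
      rintro x ⟨hxL, hxWF⟩
      obtain ⟨w, hw, f, hf, rfl⟩ := Submodule.mem_sup.mp hxWF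
      have hfS : w + f - w ∈ S := sub_mem (hLS hxL) (hWS hw)
      have : w + f - w ∈ S ⊓ F := ⟨hfS, by simpa using hf⟩
      rw [hSF] at this
      have hf0 : f = 0 := by simpa using this
      have : w + f ∈ L ⊓ W := ⟨hxL, by simpa [hf0] using hw⟩
      rwa [hLW] at this
    · rw [← sup_assoc, hLWS, hSFT]

/-- If `L ≤ L' ⊔ M` with `M` finite-dimensional, then the image of `L` in
`X ⧸ (L ⊓ L')` is finite-dimensional. -/
lemma fdQuot {L L' M : Submodule ℂ X} (hM : FiniteDimensional ℂ M)
    (h : L ≤ L' ⊔ M) : FiniteDimensional ℂ (L.map (L ⊓ L').mkQ) := by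
  haveI : FiniteDimensional ℂ (M.map L'.mkQ) := Module.Finite.map _ _
  set g : (X ⧸ (L ⊓ L')) →ₗ[ℂ] X ⧸ L' :=
    Submodule.mapQ (L ⊓ L') L' LinearMap.id (fun x hx => hx.2) with hg
  have hmem : ∀ y : (L.map (L ⊓ L').mkQ),
      g ((L.map (L ⊓ L').mkQ).subtype y) ∈ M.map L'.mkQ := by
    rintro ⟨y, hy⟩
    obtain ⟨x, hxL, rfl⟩ := hy
    have hgval : g ((L ⊓ L').mkQ x) = L'.mkQ x := rfl
    simp only [Submodule.subtype_apply, hgval]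
    obtain ⟨a, ha, m, hm, rfl⟩ := Submodule.mem_sup.mp (h hxL)
    have : L'.mkQ (a + m) = L'.mkQ m := by
      rw [map_add]
      have : L'.mkQ a = 0 := by
        rw [Submodule.mkQ_apply, Submodule.Quotient.mk_eq_zero]; exact ha
      rw [this, zero_add]
    rw [this]
    exact ⟨m, hm, rfl⟩
  refine FiniteDimensional.of_injective
    (LinearMap.codRestrict (M.map L'.mkQ) (g ∘ₗ (L.map (L ⊓ L').mkQ).subtype) hmem) ?_
  rintro ⟨y, hy⟩ ⟨z, hz⟩ hab
  have hval := congrArg Subtype.val hab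
  simp only [LinearMap.codRestrict_apply, LinearMap.comp_apply,
    Submodule.subtype_apply] at hval
  obtain ⟨x, hxL, rfl⟩ := hy
  obtain ⟨x', hx'L, rfl⟩ := hz
  have : g ((L ⊓ L').mkQ x) = L'.mkQ x := rfl
  have h2 : g ((L ⊓ L').mkQ x') = L'.mkQ x' := rfl
  rw [this, h2] at hval
  have hxx' : x - x' ∈ L' := by
    have : L'.mkQ (x - x') = 0 := by rw [map_sub, hval, sub_self]
    rwa [Submodule.mkQ_apply, Submodule.Quotient.mk_eq_zero] at this
  have hLL' : x - x' ∈ L ⊓ L' := ⟨sub_mem hxL hx'L, hxx'⟩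
  refine Subtype.ext ?_
  have : (L ⊓ L').mkQ (x - x') = 0 := by
    rw [Submodule.mkQ_apply, Submodule.Quotient.mk_eq_zero]; exact hLL'
  rw [map_sub] at this
  exact sub_eq_zero.mp this

end Aux

/-- Lemma 3.18: if `L₁ ⊆ L₃`, `L₂ ⊆ L₄`, `L₁ =ᵉ L₂` and `L₃ =ᵉ L₄` are closed
subspaces of a Banach space `X`, then `L₁` is topologically complemented in
`L₃` iff `L₂` is topologically complemented in `L₄`. -/
theorem topComplemented_iff_of_essentially_eq {X : Type*}
    [NormedAddCommGroup X] [NormedSpace ℂ X] [CompleteSpace X]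
    (L₁ L₂ L₃ L₄ : Submodule ℂ X)
    (h₁ : IsClosed (L₁ : Set X)) (h₂ : IsClosed (L₂ : Set X))
    (h₃ : IsClosed (L₃ : Set X)) (h₄ : IsClosed (L₄ : Set X))
    (h₁₃ : L₁ ≤ L₃) (h₂₄ : L₂ ≤ L₄)
    (e₁₂ : EssentiallyLE L₁ L₂ ∧ EssentiallyLE L₂ L₁)
    (e₃₄ : EssentiallyLE L₃ L₄ ∧ EssentiallyLE L₄ L₃) :
    TopComplementedIn L₁ L₃ ↔ TopComplementedIn L₂ L₄ := by
  obtain ⟨⟨M₁, hM₁fd, hM₁⟩, ⟨M₂, hM₂fd, hM₂⟩⟩ := e₁₂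
  obtain ⟨⟨M₃, hM₃fd, hM₃⟩, ⟨M₄, hM₄fd, hM₄⟩⟩ := e₃₄
  set N₁ := L₁ ⊓ L₂ with hN₁
  set N₃ := L₃ ⊓ L₄ with hN₃
  have hN₁c : IsClosed (N₁ : Set X) := h₁.inter h₂
  have hN₃c : IsClosed (N₃ : Set X) := h₃.inter h₄
  have fd₁ : FiniteDimensional ℂ (L₁.map N₁.mkQ) := fdQuot hM₁fd hM₁
  have fd₂ : FiniteDimensional ℂ (L₂.map N₁.mkQ) := by
    have : FiniteDimensional ℂ (L₂.map (L₂ ⊓ L₁).mkQ) := fdQuot hM₂fd hM₂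
    rwa [inf_comm L₂ L₁] at this
  have fd₃ : FiniteDimensional ℂ (L₃.map N₃.mkQ) := fdQuot hM₃fd hM₃
  have fd₄ : FiniteDimensional ℂ (L₄.map N₃.mkQ) := by
    have : FiniteDimensional ℂ (L₄.map (L₄ ⊓ L₃).mkQ) := fdQuot hM₄fd hM₄
    rwa [inf_comm L₄ L₃] at this
  have hN₁₃ : N₁ ≤ N₃ := inf_le_inf (h₁₃.trans le_rfl) h₂₄
  calc TopComplementedIn L₁ L₃
      ↔ TopComplementedIn N₁ L₃ := lemA inf_le_left h₁₃ fd₁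
    _ ↔ TopComplementedIn N₁ N₃ := lemB hN₃c hN₁₃ inf_le_left fd₃
    _ ↔ TopComplementedIn N₁ L₄ := (lemB hN₃c hN₁₃ inf_le_right fd₄).symm
    _ ↔ TopComplementedIn L₂ L₄ := (lemA inf_le_right h₂₄ fd₂).symm
end
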